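/- arXiv:2603.07088 — 6 statements merged into one kernel-verified Lean document; each statement's English description precedes it below -/
import Mathlib

section
/- Let n ≥ 2 and let z : Fin n → ℂ be admissible with Δ(z) = Δmax(n) (a maximizer). Then for every index k there exists an index j ≠ k with dist (z k) (z j) = 2. -/
/-! If all other points were at distance `< 2` from `z k`, then `z k` could be moved freely in a
neighbourhood without losing admissibility. Moving it to `w` multiplies `Δ` by
`(|p w| / |p (z k)|) ^ 2`, where `p w = ∏_{j ≠ k} (w - z j)`, so maximality (with `Δ(z) > 0`)
makes `z k` a local maximum of `|p|`, and `p` is constant by the maximum modulus principle.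
But `p` vanishes at the other points (there are some as `n ≥ 2`) and not at `z k`, since
`Δ(z) > 0` forces the points to be distinct. -/

open Finset Function Filter Topology

/-- The product over all ordered pairs `(i,j)` with `i ≠ j` of `dist (z i) (z j)`. -/
noncomputable def Delta (n : ℕ) (z : Fin n → ℂ) : ℝ :=
  ∏ p ∈ Finset.univ.filter (fun p : Fin n × Fin n => p.1 ≠ p.2), dist (z p.1) (z p.2)

/-- `z` is admissible if all pairwise distances are at most 2. -/
def Admissible (n : ℕ) (z : Fin n → ℂ) : Prop :=
  ∀ i j, dist (z i) (z j) ≤ 2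

/-- The maximal discriminant over admissible configurations. -/
noncomputable def Dmax (n : ℕ) : ℝ :=
  sSup {d : ℝ | ∃ z : Fin n → ℂ, Admissible n z ∧ Delta n z = d}

theorem Complex.not_isLocalMax_norm {f : ℂ → ℂ} (hf : Differentiable ℂ f) {a b : ℂ}
    (hab : f b ≠ f a) : ¬IsLocalMax (‖f ·‖) a := by
  intro hmax
  have hloc : f =ᶠ[𝓝 a] fun _ => f a :=
    Complex.eventually_eq_of_isLocalMax_norm (.of_forall hf) hmax
  have hconst : Set.EqOn f (fun _ => f a) Set.univ :=
    (hf.differentiableOn.analyticOnNhd isOpen_univ).eqOn_of_preconnected_of_eventuallyEq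
      analyticOnNhd_const isPreconnected_univ (Set.mem_univ a) hloc
  exact hab (hconst (Set.mem_univ b))

theorem Finset.prod_offDiag_insert {α M : Type*} [DecidableEq α] [CommMonoid M] {s : Finset α}
    {a : α} (ha : a ∉ s) (g : α → α → M) :
    ∏ p ∈ (insert a s).offDiag, g p.1 p.2 =
      (∏ p ∈ s.offDiag, g p.1 p.2) * ∏ j ∈ s, g a j * g j a := by
  rw [offDiag_insert ha, prod_union, prod_union, prod_mul_distrib, singleton_product,
    product_singleton, prod_map, prod_map, mul_assoc]
  · rfl
  · rw [disjoint_left]; grind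
  · rw [disjoint_left]; grind

namespace Delta

variable {n : ℕ} {z : Fin n → ℂ}

theorem eq_prod_offDiag (z : Fin n → ℂ) :
    Delta n z = ∏ p ∈ (univ : Finset (Fin n)).offDiag, dist (z p.1) (z p.2) := by
  rw [Delta]; congr 1; ext; simp

theorem eq_sq_mul (z : Fin n → ℂ) (k : Fin n) :
    Delta n z = (∏ j ∈ univ.erase k, dist (z k) (z j)) ^ 2 *
      ∏ p ∈ (univ.erase k).offDiag, dist (z p.1) (z p.2) := by
  conv_lhs => rw [eq_prod_offDiag, ← insert_erase (mem_univ k)]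
  rw [prod_offDiag_insert (notMem_erase k univ) fun i j => dist (z i) (z j), mul_comm, sq,
    ← prod_mul_distrib]
  simp_rw [dist_comm (z _) (z k)]

theorem pos_of_injective (hz : Injective z) : 0 < Delta n z :=
  prod_pos fun _ hp => dist_pos.2 (hz.ne (mem_filter.1 hp).2)

theorem injective_of_pos (h : 0 < Delta n z) : Injective z := by
  intro i j hij
  by_contra hne
  exact h.ne' (prod_eq_zero (mem_filter.2 ⟨mem_univ (i, j), hne⟩) (dist_eq_zero.2 hij))

theorem prod_dist_le_of_update_le {k : Fin n} {w : ℂ} (hpos : 0 < Delta n z)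
    (h : Delta n (update z k w) ≤ Delta n z) :
    ∏ j ∈ univ.erase k, dist w (z j) ≤ ∏ j ∈ univ.erase k, dist (z k) (z j) := by
  have hP : ∏ j ∈ univ.erase k, dist (update z k w k) (update z k w j) =
      ∏ j ∈ univ.erase k, dist w (z j) :=
    prod_congr rfl fun j hj => by rw [update_self, update_of_ne (ne_of_mem_erase hj)]
  have hR : ∏ p ∈ (univ.erase k).offDiag, dist (update z k w p.1) (update z k w p.2) =
      ∏ p ∈ (univ.erase k).offDiag, dist (z p.1) (z p.2) :=
    prod_congr rfl fun p hp => by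
      obtain ⟨h1, h2, -⟩ := mem_offDiag.1 hp
      rw [update_of_ne (ne_of_mem_erase h1), update_of_ne (ne_of_mem_erase h2)]
  rw [eq_sq_mul _ k, eq_sq_mul z k, hP, hR] at h
  rw [eq_sq_mul _ k] at hpos
  have hRpos := pos_of_mul_pos_right hpos (sq_nonneg _)
  exact (pow_le_pow_iff_left₀ (prod_nonneg fun _ _ => dist_nonneg)
    (prod_nonneg fun _ _ => dist_nonneg) two_ne_zero).1 (le_of_mul_le_mul_right h hRpos)

end Delta

namespace Admissible

variable {n : ℕ} {z : Fin n → ℂ}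

theorem of_norm_le_one (h : ∀ i, ‖z i‖ ≤ 1) : Admissible n z := fun i j =>
  (dist_le_norm_add_norm (z i) (z j)).trans (by linarith [h i, h j])

theorem update {k : Fin n} {w : ℂ} (hz : Admissible n z) (hw : ∀ j ≠ k, dist w (z j) ≤ 2) :
    Admissible n (Function.update z k w) := by
  intro i j
  by_cases hi : i = k <;> by_cases hj : j = k
  · simp [hi, hj]
  · rw [hi, update_self, update_of_ne hj]; exact hw j hj
  · rw [hj, update_self, update_of_ne hi, dist_comm]; exact hw i hi
  · rw [update_of_ne hi, update_of_ne hj]; exact hz i j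

theorem eventually_update {k : Fin n} (hz : Admissible n z)
    (hk : ∀ j ≠ k, dist (z k) (z j) < 2) :
    ∀ᶠ w in 𝓝 (z k), Admissible n (Function.update z k w) := by
  have : ∀ᶠ w in 𝓝 (z k), ∀ j ∈ univ.erase k, dist w (z j) < 2 :=
    (eventually_all_finset _).2 fun j hj =>
      Metric.isOpen_ball.mem_nhds (Metric.mem_ball.2 (hk j (ne_of_mem_erase hj)))
  filter_upwards [this] with w hw
  exact hz.update fun j hj => (hw j (mem_erase.2 ⟨hj, mem_univ j⟩)).le

end Admissible

theorem bddAbove_Delta (n : ℕ) :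
    BddAbove {d : ℝ | ∃ z : Fin n → ℂ, Admissible n z ∧ Delta n z = d} := by
  refine ⟨2 ^ #(univ : Finset (Fin n)).offDiag, ?_⟩
  rintro _ ⟨z, hz, rfl⟩
  rw [Delta.eq_prod_offDiag, ← prod_const]
  exact prod_le_prod (fun _ _ => dist_nonneg) fun _ _ => hz _ _

theorem Delta_le_Dmax {n : ℕ} {z : Fin n → ℂ} (hz : Admissible n z) : Delta n z ≤ Dmax n :=
  le_csSup (bddAbove_Delta n) ⟨z, hz, rfl⟩

theorem Dmax_pos (n : ℕ) : 0 < Dmax n := by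
  let z : Fin n → ℂ := fun i => (i : ℂ) / n
  have hz : Admissible n z := .of_norm_le_one fun i => by
    rw [norm_div, Complex.norm_natCast, Complex.norm_natCast]
    exact div_le_one_of_le₀ (mod_cast i.is_lt.le) n.cast_nonneg
  have hinj : Injective z := fun i j hij =>
    Fin.ext <| mod_cast (div_left_inj' (Nat.cast_ne_zero.2 i.pos.ne' : (n : ℂ) ≠ 0)).1 hij
  exact (Delta.pos_of_injective hinj).trans_le (Delta_le_Dmax hz)

theorem stmt3 (n : ℕ) (hn : 2 ≤ n) (z : Fin n → ℂ)
    (hadm : Admissible n z) (hmax : Delta n z = Dmax n) :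
    ∀ k : Fin n, ∃ j : Fin n, j ≠ k ∧ dist (z k) (z j) = 2 := by
  intro k
  by_contra! hfar
  have hpos : 0 < Delta n z := hmax ▸ Dmax_pos n
  let p : ℂ → ℂ := fun w => ∏ j ∈ univ.erase k, (w - z j)
  have hloc : IsLocalMax (‖p ·‖) (z k) := by
    filter_upwards [hadm.eventually_update fun j hj => (hadm k j).lt_of_ne (hfar j hj)] with w hw
    simpa only [p, norm_prod, ← dist_eq_norm] using
      Delta.prod_dist_le_of_update_le hpos (hmax ▸ Delta_le_Dmax hw)
  have : Nontrivial (Fin n) := Fin.nontrivial_iff_two_le.2 hn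
  obtain ⟨j₀, hj₀⟩ := exists_ne k
  have hp : Differentiable ℂ p :=
    Differentiable.fun_finsetProd fun j _ => differentiable_id.sub_const _
  have hpj₀ : p (z j₀) = 0 := prod_eq_zero (mem_erase.2 ⟨hj₀, mem_univ _⟩) (sub_self _)
  have hpk : p (z k) ≠ 0 := prod_ne_zero_iff.2 fun j hj =>
    sub_ne_zero.2 ((Delta.injective_of_pos hpos).ne (ne_of_mem_erase hj).symm)
  exact Complex.not_isLocalMax_norm hp (hpj₀.trans_ne hpk.symm) hloc
end

section
/- Let n ≥ 2 and let z : Fin n → ℂ be admissible with Δ(z) = Δmax(n) (a maximizer). If a, b, c, d are indices with dist (z a) (z b) = 2 and dist (z c) (z d) = 2, then the closed segments [z a, z b] and [z c, z d] (real segments in ℂ) have nonempty intersection. -/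
section SegAux
open Set

lemma aux_single (X Y u v : ℂ) (hXY : dist X Y = 2) (hu : dist Y u ≤ 2) (hv : dist Y v ≤ 2)
    (hX : X ∈ convexHull ℝ (insert Y {u, v} : Set ℂ)) : X ∈ segment ℝ u v := by
  rw [convexHull_insert (by simp : ({u, v} : Set ℂ).Nonempty), mem_convexJoin] at hX
  obtain ⟨y, hy, q, hq, hXseg⟩ := hX
  rw [mem_singleton_iff] at hy
  subst hy
  rw [convexHull_pair] at hq
  obtain ⟨s, t, hs, ht, hst, rfl⟩ := hq
  have hYq : dist y (s • u + t • v) ≤ 2 := by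
    have h : y - (s • u + t • v) = s • (y - u) + t • (y - v) := by
      match_scalars <;> linarith
    rw [dist_eq_norm, h]
    calc ‖s • (y - u) + t • (y - v)‖ ≤ ‖s • (y - u)‖ + ‖t • (y - v)‖ := norm_add_le _ _
      _ = s * ‖y - u‖ + t * ‖y - v‖ := by
          rw [norm_smul, norm_smul, Real.norm_of_nonneg hs, Real.norm_of_nonneg ht]
      _ ≤ s * 2 + t * 2 := by
          gcongr <;> [exact (dist_eq_norm y u ▸ hu); exact (dist_eq_norm y v ▸ hv)]
      _ = 2 := by linarith
  set q := s • u + t • v with hqdef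
  obtain ⟨r, r', hr, hr', hrr', hXeq⟩ := hXseg
  have hXY' : X - y = r' • (q - y) := by
    rw [← hXeq]; match_scalars <;> linarith
  have h2 : (2:ℝ) = r' * dist y q := by
    rw [← hXY, dist_eq_norm, hXY', norm_smul, Real.norm_of_nonneg hr', dist_eq_norm,
      show q - y = -(y - q) by ring, norm_neg]
  have hr'1 : r' ≤ 1 := by linarith
  have hr1 : r' = 1 := by nlinarith
  have hXq : X = q := by
    rw [hr1, one_smul] at hXY'
    linear_combination hXY'
  rw [hXq]
  exact ⟨s, t, hs, ht, hst, rfl⟩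

lemma aux_cross (A B C D p : ℂ) (hAB : dist A B = 2) (hCD : dist C D = 2)
    (hAC : dist A C ≤ 2) (hBD : dist B D ≤ 2)
    (hp1 : p ∈ segment ℝ A C) (hp2 : p ∈ segment ℝ B D) :
    p ∈ segment ℝ A B ∧ p ∈ segment ℝ C D := by
  have e1 : dist A p + dist p C = dist A C := dist_add_dist_of_mem_segment hp1
  have e2 : dist B p + dist p D = dist B D := dist_add_dist_of_mem_segment hp2
  have t1 : dist A B ≤ dist A p + dist p B := dist_triangle _ _ _
  have t2 : dist C D ≤ dist C p + dist p D := dist_triangle _ _ _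
  have hpC : dist p C = dist C p := dist_comm _ _
  have hpB : dist p B = dist B p := dist_comm _ _
  have s1 : dist A p + dist p B = dist A B := by linarith
  have s2 : dist C p + dist p D = dist C D := by linarith
  constructor
  · rw [mem_segment_iff_wbtw, ← dist_add_dist_eq_iff]; exact s1
  · rw [mem_segment_iff_wbtw, ← dist_add_dist_eq_iff]; exact s2

lemma key (A B C D : ℂ) (hAB : dist A B = 2) (hCD : dist C D = 2)
    (hAC : dist A C ≤ 2) (hAD : dist A D ≤ 2) (hBC : dist B C ≤ 2) (hBD : dist B D ≤ 2) :
    (segment ℝ A B ∩ segment ℝ C D).Nonempty := by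
  set f : Fin 4 → ℂ := ![A, B, C, D] with hf
  have hdep : ¬ AffineIndependent ℝ f := by
    intro h
    have h1 := h.card_le_finrank_succ
    have h2 : Module.finrank ℝ (vectorSpan ℝ (Set.range f)) ≤ Module.finrank ℝ ℂ :=
      Submodule.finrank_le _
    rw [Complex.finrank_real_complex] at h2
    simp only [Fintype.card_fin] at h1
    omega
  obtain ⟨I, p, hpI, hpIc⟩ := Convex.radon_partition hdep
  have sub : ∀ (J : Set (Fin 4)) (S : Set ℂ), ((0 : Fin 4) ∈ J → A ∈ S) →
      ((1 : Fin 4) ∈ J → B ∈ S) → ((2 : Fin 4) ∈ J → C ∈ S) →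
      ((3 : Fin 4) ∈ J → D ∈ S) → f '' J ⊆ S := by
    rintro J S s0 s1 s2 s3 x ⟨i, hi, rfl⟩
    fin_cases i
    · exact s0 hi
    · exact s1 hi
    · exact s2 hi
    · exact s3 hi
  by_cases h0 : (0 : Fin 4) ∈ I <;> by_cases h1 : (1 : Fin 4) ∈ I <;>
    by_cases h2 : (2 : Fin 4) ∈ I <;> by_cases h3 : (3 : Fin 4) ∈ I
  · -- TTTT
    have hemp : p ∈ convexHull ℝ (∅ : Set ℂ) := convexHull_mono (sub Iᶜ _ (fun h => absurd h0 h) (fun h => absurd h1 h) (fun h => absurd h2 h) (fun h => absurd h3 h)) hpIc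
    rw [convexHull_empty] at hemp; exact hemp.elim
  · -- TTTF
    have hq1 : p ∈ convexHull ℝ ({D} : Set ℂ) := convexHull_mono (sub Iᶜ _ (fun h => absurd h0 h) (fun h => absurd h1 h) (fun h => absurd h2 h) (fun _ => by simp)) hpIc
    rw [convexHull_singleton, Set.mem_singleton_iff] at hq1
    rw [hq1] at hpI hpIc
    have hq2 : D ∈ convexHull ℝ ({C, A, B} : Set ℂ) := convexHull_mono (sub I _ (fun _ => by simp) (fun _ => by simp) (fun _ => by simp) (fun h => absurd h h3)) hpI
    have hm := aux_single D C A B (by rw [dist_comm]; exact hCD) (by rw [dist_comm]; exact hAC) (by rw [dist_comm]; exact hBC) hq2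
    exact ⟨D, hm, right_mem_segment ℝ C D⟩
  · -- TTFT
    have hq1 : p ∈ convexHull ℝ ({C} : Set ℂ) := convexHull_mono (sub Iᶜ _ (fun h => absurd h0 h) (fun h => absurd h1 h) (fun _ => by simp) (fun h => absurd h3 h)) hpIc
    rw [convexHull_singleton, Set.mem_singleton_iff] at hq1
    rw [hq1] at hpI hpIc
    have hq2 : C ∈ convexHull ℝ ({D, A, B} : Set ℂ) := convexHull_mono (sub I _ (fun _ => by simp) (fun _ => by simp) (fun h => absurd h h2) (fun _ => by simp)) hpI
    have hm := aux_single C D A B hCD (by rw [dist_comm]; exact hAD) (by rw [dist_comm]; exact hBD) hq2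
    exact ⟨C, hm, left_mem_segment ℝ C D⟩
  · -- TTFF
    have hq1 : p ∈ convexHull ℝ ({A, B} : Set ℂ) := convexHull_mono (sub I _ (fun _ => by simp) (fun _ => by simp) (fun h => absurd h h2) (fun h => absurd h h3)) hpI
    have hq2 : p ∈ convexHull ℝ ({C, D} : Set ℂ) := convexHull_mono (sub Iᶜ _ (fun h => absurd h0 h) (fun h => absurd h1 h) (fun _ => by simp) (fun _ => by simp)) hpIc
    rw [convexHull_pair] at hq1 hq2
    exact ⟨p, hq1, hq2⟩
  · -- TFTT
    have hq1 : p ∈ convexHull ℝ ({B} : Set ℂ) := convexHull_mono (sub Iᶜ _ (fun h => absurd h0 h) (fun _ => by simp) (fun h => absurd h2 h) (fun h => absurd h3 h)) hpIc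
    rw [convexHull_singleton, Set.mem_singleton_iff] at hq1
    rw [hq1] at hpI hpIc
    have hq2 : B ∈ convexHull ℝ ({A, C, D} : Set ℂ) := convexHull_mono (sub I _ (fun _ => by simp) (fun h => absurd h h1) (fun _ => by simp) (fun _ => by simp)) hpI
    have hm := aux_single B A C D (by rw [dist_comm]; exact hAB) hAC hAD hq2
    exact ⟨B, right_mem_segment ℝ A B, hm⟩
  · -- TFTF
    have hq1 : p ∈ convexHull ℝ ({A, C} : Set ℂ) := convexHull_mono (sub I _ (fun _ => by simp) (fun h => absurd h h1) (fun _ => by simp) (fun h => absurd h h3)) hpI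
    have hq2 : p ∈ convexHull ℝ ({B, D} : Set ℂ) := convexHull_mono (sub Iᶜ _ (fun h => absurd h0 h) (fun _ => by simp) (fun h => absurd h2 h) (fun _ => by simp)) hpIc
    rw [convexHull_pair] at hq1 hq2
    obtain ⟨m1, m2⟩ := aux_cross A B C D p hAB hCD hAC hBD hq1 hq2
    exact ⟨p, m1, m2⟩
  · -- TFFT
    have hq1 : p ∈ convexHull ℝ ({A, D} : Set ℂ) := convexHull_mono (sub I _ (fun _ => by simp) (fun h => absurd h h1) (fun h => absurd h h2) (fun _ => by simp)) hpI
    have hq2 : p ∈ convexHull ℝ ({B, C} : Set ℂ) := convexHull_mono (sub Iᶜ _ (fun h => absurd h0 h) (fun _ => by simp) (fun _ => by simp) (fun h => absurd h3 h)) hpIc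
    rw [convexHull_pair] at hq1 hq2
    obtain ⟨m1, m2⟩ := aux_cross A B D C p hAB (by rw [dist_comm]; exact hCD) hAD hBC hq1 hq2
    rw [segment_symm] at m2
    exact ⟨p, m1, m2⟩
  · -- TFFF
    have hq1 : p ∈ convexHull ℝ ({A} : Set ℂ) := convexHull_mono (sub I _ (fun _ => by simp) (fun h => absurd h h1) (fun h => absurd h h2) (fun h => absurd h h3)) hpI
    rw [convexHull_singleton, Set.mem_singleton_iff] at hq1
    rw [hq1] at hpI hpIc
    have hq2 : A ∈ convexHull ℝ ({B, C, D} : Set ℂ) := convexHull_mono (sub Iᶜ _ (fun h => absurd h0 h) (fun _ => by simp) (fun _ => by simp) (fun _ => by simp)) hpIc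
    have hm := aux_single A B C D hAB hBC hBD hq2
    exact ⟨A, left_mem_segment ℝ A B, hm⟩
  · -- FTTT
    have hq1 : p ∈ convexHull ℝ ({A} : Set ℂ) := convexHull_mono (sub Iᶜ _ (fun _ => by simp) (fun h => absurd h1 h) (fun h => absurd h2 h) (fun h => absurd h3 h)) hpIc
    rw [convexHull_singleton, Set.mem_singleton_iff] at hq1
    rw [hq1] at hpI hpIc
    have hq2 : A ∈ convexHull ℝ ({B, C, D} : Set ℂ) := convexHull_mono (sub I _ (fun h => absurd h h0) (fun _ => by simp) (fun _ => by simp) (fun _ => by simp)) hpI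
    have hm := aux_single A B C D hAB hBC hBD hq2
    exact ⟨A, left_mem_segment ℝ A B, hm⟩
  · -- FTTF
    have hq1 : p ∈ convexHull ℝ ({A, D} : Set ℂ) := convexHull_mono (sub Iᶜ _ (fun _ => by simp) (fun h => absurd h1 h) (fun h => absurd h2 h) (fun _ => by simp)) hpIc
    have hq2 : p ∈ convexHull ℝ ({B, C} : Set ℂ) := convexHull_mono (sub I _ (fun h => absurd h h0) (fun _ => by simp) (fun _ => by simp) (fun h => absurd h h3)) hpI
    rw [convexHull_pair] at hq1 hq2
    obtain ⟨m1, m2⟩ := aux_cross A B D C p hAB (by rw [dist_comm]; exact hCD) hAD hBC hq1 hq2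
    rw [segment_symm] at m2
    exact ⟨p, m1, m2⟩
  · -- FTFT
    have hq1 : p ∈ convexHull ℝ ({A, C} : Set ℂ) := convexHull_mono (sub Iᶜ _ (fun _ => by simp) (fun h => absurd h1 h) (fun _ => by simp) (fun h => absurd h3 h)) hpIc
    have hq2 : p ∈ convexHull ℝ ({B, D} : Set ℂ) := convexHull_mono (sub I _ (fun h => absurd h h0) (fun _ => by simp) (fun h => absurd h h2) (fun _ => by simp)) hpI
    rw [convexHull_pair] at hq1 hq2
    obtain ⟨m1, m2⟩ := aux_cross A B C D p hAB hCD hAC hBD hq1 hq2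
    exact ⟨p, m1, m2⟩
  · -- FTFF
    have hq1 : p ∈ convexHull ℝ ({B} : Set ℂ) := convexHull_mono (sub I _ (fun h => absurd h h0) (fun _ => by simp) (fun h => absurd h h2) (fun h => absurd h h3)) hpI
    rw [convexHull_singleton, Set.mem_singleton_iff] at hq1
    rw [hq1] at hpI hpIc
    have hq2 : B ∈ convexHull ℝ ({A, C, D} : Set ℂ) := convexHull_mono (sub Iᶜ _ (fun _ => by simp) (fun h => absurd h1 h) (fun _ => by simp) (fun _ => by simp)) hpIc
    have hm := aux_single B A C D (by rw [dist_comm]; exact hAB) hAC hAD hq2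
    exact ⟨B, right_mem_segment ℝ A B, hm⟩
  · -- FFTT
    have hq1 : p ∈ convexHull ℝ ({A, B} : Set ℂ) := convexHull_mono (sub Iᶜ _ (fun _ => by simp) (fun _ => by simp) (fun h => absurd h2 h) (fun h => absurd h3 h)) hpIc
    have hq2 : p ∈ convexHull ℝ ({C, D} : Set ℂ) := convexHull_mono (sub I _ (fun h => absurd h h0) (fun h => absurd h h1) (fun _ => by simp) (fun _ => by simp)) hpI
    rw [convexHull_pair] at hq1 hq2
    exact ⟨p, hq1, hq2⟩
  · -- FFTF
    have hq1 : p ∈ convexHull ℝ ({C} : Set ℂ) := convexHull_mono (sub I _ (fun h => absurd h h0) (fun h => absurd h h1) (fun _ => by simp) (fun h => absurd h h3)) hpI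
    rw [convexHull_singleton, Set.mem_singleton_iff] at hq1
    rw [hq1] at hpI hpIc
    have hq2 : C ∈ convexHull ℝ ({D, A, B} : Set ℂ) := convexHull_mono (sub Iᶜ _ (fun _ => by simp) (fun _ => by simp) (fun h => absurd h2 h) (fun _ => by simp)) hpIc
    have hm := aux_single C D A B hCD (by rw [dist_comm]; exact hAD) (by rw [dist_comm]; exact hBD) hq2
    exact ⟨C, hm, left_mem_segment ℝ C D⟩
  · -- FFFT
    have hq1 : p ∈ convexHull ℝ ({D} : Set ℂ) := convexHull_mono (sub I _ (fun h => absurd h h0) (fun h => absurd h h1) (fun h => absurd h h2) (fun _ => by simp)) hpI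
    rw [convexHull_singleton, Set.mem_singleton_iff] at hq1
    rw [hq1] at hpI hpIc
    have hq2 : D ∈ convexHull ℝ ({C, A, B} : Set ℂ) := convexHull_mono (sub Iᶜ _ (fun _ => by simp) (fun _ => by simp) (fun _ => by simp) (fun h => absurd h3 h)) hpIc
    have hm := aux_single D C A B (by rw [dist_comm]; exact hCD) (by rw [dist_comm]; exact hAC) (by rw [dist_comm]; exact hBC) hq2
    exact ⟨D, hm, right_mem_segment ℝ C D⟩
  · -- FFFF
    have hemp : p ∈ convexHull ℝ (∅ : Set ℂ) := convexHull_mono (sub I _ (fun h => absurd h h0) (fun h => absurd h h1) (fun h => absurd h h2) (fun h => absurd h h3)) hpI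
    rw [convexHull_empty] at hemp; exact hemp.elim

end SegAux

theorem stmt6 (n : ℕ) (hn : 2 ≤ n) (z : Fin n → ℂ)
    (hadm : Admissible n z) (hmax : Delta n z = Dmax n)
    (a b c d : Fin n) (hab : dist (z a) (z b) = 2) (hcd : dist (z c) (z d) = 2) :
    (segment ℝ (z a) (z b) ∩ segment ℝ (z c) (z d)).Nonempty :=
  key (z a) (z b) (z c) (z d) hab hcd (hadm a c) (hadm a d) (hadm b c) (hadm b d)
end

section
/- (KKT conditions) Let n : ℕ and let z : Fin n → ℂ have pairwise distinct values and be admissible. Suppose z is a local maximizer of Δ on the feasible set S = { w : Fin n → ℂ | dist (w i) (w j) ≤ 2 for all i, j }, i.e. IsLocalMaxOn Δ S z. Then there exists a symmetric function λ : Fin n → Fin n → ℝ with λ i j ≥ 0 for all i, j, such that λ i j = 0 whenever dist (z i) (z j) < 2, and for every index k: Σ_{j ≠ k} (z j − z k)⁻¹ = Σ_{j ≠ k} (λ k j : ℂ) · (conj (z j) − conj (z k)), where conj denotes complex conjugation. -/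
section Farkas

variable {𝕜 M N ι : Type*} [Field 𝕜] [LinearOrder 𝕜] [IsStrictOrderedRing 𝕜]
  [AddCommGroup M] [Module 𝕜 M] [AddCommGroup N] [Module 𝕜 N]

-- A test vector `x` for the problem projected along `c` onto the kernel of `p · y` gives the
-- test vector `x - (p c x / p c y) • y` for the original one.
theorem pairing_sub_smul_nonpos_of_pairing_nonpos (p : M →ₗ[𝕜] N →ₗ[𝕜] 𝕜) {s : Finset ι}
    {a : ι → M} {b c : M} {y : N} (hc : 0 < p c y)
    (h : ∀ x, p c x ≤ 0 → (∀ i ∈ s, p (a i) x ≤ 0) → p b x ≤ 0) (x : N)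
    (hx : ∀ i ∈ s, p (a i - (p (a i) y / p c y) • c) x ≤ 0) :
    p (b - (p b y / p c y) • c) x ≤ 0 := by
  have key := h (x - (p c x / p c y) • y) (by
    simp only [map_sub, map_smul, smul_eq_mul]
    rw [div_mul_cancel₀ _ hc.ne', sub_self]) fun i hi => by
      have := hx i hi
      simp only [map_sub, map_smul, LinearMap.sub_apply, LinearMap.smul_apply,
        smul_eq_mul] at this ⊢
      linarith [show p (a i) y / p c y * p c x = p c x / p c y * p (a i) y by ring]
  simp only [map_sub, map_smul, LinearMap.sub_apply, LinearMap.smul_apply, smul_eq_mul] at key ⊢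
  linarith [show p b y / p c y * p c x = p c x / p c y * p b y by ring]

/-- Farkas' lemma. -/
theorem exists_nonneg_combination_of_pairing_nonpos (p : M →ₗ[𝕜] N →ₗ[𝕜] 𝕜)
    (hp : Function.Injective p) (s : Finset ι) (a : ι → M) (b : M)
    (h : ∀ y, (∀ i ∈ s, p (a i) y ≤ 0) → p b y ≤ 0) :
    ∃ μ : ι → 𝕜, (∀ i, 0 ≤ μ i) ∧ (∀ i ∉ s, μ i = 0) ∧ b = ∑ i ∈ s, μ i • a i := by
  classical
  induction s using Finset.induction_on generalizing a b with
  | empty =>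
    have hb : p b = 0 := LinearMap.ext fun y =>
      le_antisymm (h y (by simp)) (by simpa using h (-y) (by simp))
    exact ⟨0, fun _ => le_rfl, fun _ _ => rfl, by simpa using hp (hb.trans (map_zero p).symm)⟩
  | insert j s hj ih =>
    by_cases hsep : ∃ y, (∀ i ∈ s, p (a i) y ≤ 0) ∧ 0 < p b y
    · obtain ⟨y, hy, hby⟩ := hsep
      have hjy : 0 < p (a j) y := by
        by_contra! hjy
        exact hby.not_ge (h y (Finset.forall_mem_insert _ _ _ |>.mpr ⟨hjy, hy⟩))
      set σ := p (a j) y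
      obtain ⟨μ, hμ0, hμs, hμ⟩ := ih (fun i => a i - (p (a i) y / σ) • a j)
        (b - (p b y / σ) • a j) <| pairing_sub_smul_nonpos_of_pairing_nonpos p hjy fun x hjx hx =>
          h x (Finset.forall_mem_insert _ _ _ |>.mpr ⟨hjx, hx⟩)
      set c := p b y / σ - ∑ i ∈ s, μ i * (p (a i) y / σ)
      have hc : 0 ≤ c := by
        have : ∑ i ∈ s, μ i * (p (a i) y / σ) ≤ 0 := Finset.sum_nonpos fun i hi =>
          mul_nonpos_of_nonneg_of_nonpos (hμ0 i) (div_nonpos_of_nonpos_of_nonneg (hy i hi) hjy.le)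
        have : 0 < p b y / σ := div_pos hby hjy
        linarith
      refine ⟨Function.update μ j c, fun i => ?_, fun i hi => ?_, ?_⟩
      · rcases eq_or_ne i j with rfl | hij
        · simpa using hc
        · simpa [hij] using hμ0 i
      · rw [Finset.mem_insert, not_or] at hi
        simpa [hi.1] using hμs i hi.2
      · have hupd : ∀ i ∈ s, Function.update μ j c i = μ i := fun i hi =>
          Function.update_of_ne (ne_of_mem_of_not_mem hi hj) _ _
        rw [Finset.sum_insert hj, Finset.sum_congr rfl fun i hi => by rw [hupd i hi],
          Function.update_self]
        conv_lhs => rw [← sub_add_cancel b ((p b y / σ) • a j), hμ]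
        simp only [smul_sub, smul_smul, Finset.sum_sub_distrib, ← Finset.sum_smul, c, sub_smul]
        abel
    · push Not at hsep
      obtain ⟨μ, hμ0, hμs, hμ⟩ := ih a b hsep
      refine ⟨μ, hμ0, fun i hi => hμs i (by simp_all), ?_⟩
      rw [Finset.sum_insert hj, hμs j hj, zero_smul, zero_add, hμ]

end Farkas

open Filter Topology

section KKT

variable {E ι : Type*} [NormedAddCommGroup E] [NormedSpace ℝ E]

theorem HasFDerivAt.eventually_nhdsGT_add_smul_nonpos {h : E → ℝ} {h' : StrongDual ℝ E}
    {x₀ w : E} (hd : HasFDerivAt h h' x₀) (hx₀ : h x₀ ≤ 0) (hw : h x₀ = 0 → h' w < 0) :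
    ∀ᶠ t in 𝓝[>] (0 : ℝ), h (x₀ + t • w) ≤ 0 := by
  have hline : HasDerivAt (fun t : ℝ => h (x₀ + t • w)) (h' w) 0 := by
    refine hd.comp_hasDerivAt_of_eq 0 ?_ (by simp)
    simpa using ((hasDerivAt_id (0 : ℝ)).smul_const w).const_add x₀
  rcases hx₀.lt_or_eq with hlt | heq
  · have hev : ∀ᶠ t in 𝓝 (0 : ℝ), h (x₀ + t • w) < 0 :=
      hline.continuousAt.eventually (gt_mem_nhds (by simpa using hlt))
    exact nhdsWithin_le_nhds (hev.mono fun t ht => ht.le)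
  · filter_upwards [hline.tendsto_slope_zero_right.eventually (gt_mem_nhds (hw heq)),
      self_mem_nhdsWithin] with t hslope (ht : 0 < t)
    simp only [zero_add, zero_smul, add_zero, heq, sub_zero, smul_eq_mul] at hslope
    simpa [mul_inv_cancel_left₀ ht.ne'] using (mul_neg_of_pos_of_neg ht hslope).le

variable {f : E → ℝ} {g : ι → E → ℝ} {f' : StrongDual ℝ E} {g' : ι → StrongDual ℝ E}
  {x₀ u : E}

theorem IsLocalMaxOn.apply_nonpos_of_mfcq [Finite ι]
    (hmax : IsLocalMaxOn f {x | ∀ i, g i x ≤ 0} x₀) (hf : HasFDerivAt f f' x₀)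
    (hg : ∀ i, HasFDerivAt (g i) (g' i) x₀) (hx₀ : ∀ i, g i x₀ ≤ 0)
    (hu : ∀ i, g i x₀ = 0 → g' i u < 0) {v : E} (hv : ∀ i, g i x₀ = 0 → g' i v ≤ 0) :
    f' v ≤ 0 := by
  have hstrict : ∀ ε > (0 : ℝ), f' (v + ε • u) ≤ 0 := fun ε hε =>
    hmax.hasFDerivWithinAt_nonpos hf.hasFDerivWithinAt <|
      mem_posTangentConeAt_of_frequently_mem <| Eventually.frequently <|
        eventually_all.2 fun i => (hg i).eventually_nhdsGT_add_smul_nonpos (hx₀ i) fun h0 => by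
          rw [map_add, map_smul, smul_eq_mul]
          nlinarith [hv i h0, hu i h0]
  have hlim : Tendsto (fun ε : ℝ => f' (v + ε • u)) (𝓝[>] 0) (𝓝 (f' v)) := by
    refine tendsto_nhdsWithin_of_tendsto_nhds ?_
    have : Continuous fun ε : ℝ => f' (v + ε • u) := by fun_prop
    simpa using this.tendsto 0
  exact le_of_tendsto hlim (eventually_nhdsWithin_of_forall hstrict)

theorem IsLocalMaxOn.exists_kkt_multipliers [Fintype ι]
    (hmax : IsLocalMaxOn f {x | ∀ i, g i x ≤ 0} x₀) (hf : HasFDerivAt f f' x₀)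
    (hg : ∀ i, HasFDerivAt (g i) (g' i) x₀) (hx₀ : ∀ i, g i x₀ ≤ 0)
    (hu : ∀ i, g i x₀ = 0 → g' i u < 0) :
    ∃ μ : ι → ℝ, (∀ i, 0 ≤ μ i) ∧ (∀ i, g i x₀ < 0 → μ i = 0) ∧ f' = ∑ i, μ i • g' i := by
  obtain ⟨μ, hμ0, hμ, hf'⟩ := exists_nonneg_combination_of_pairing_nonpos
    (ContinuousLinearMap.coeLM ℝ) ContinuousLinearMap.coe_injective
    (Finset.univ.filter fun i => g i x₀ = 0) g' f' fun v hv =>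
      hmax.apply_nonpos_of_mfcq hf hg hx₀ hu fun i hi => hv i (by simpa using hi)
  refine ⟨μ, hμ0, fun i hi => hμ i (by simpa using hi.ne), ?_⟩
  rw [hf', Finset.sum_filter_of_ne]
  intro i _ hne
  by_contra hi
  exact hne (by rw [hμ i (by simpa using hi), zero_smul])

end KKT

open ComplexConjugate

section Pairs

variable {n : ℕ}

noncomputable def pairDiff (p : Fin n × Fin n) : (Fin n → ℂ) →L[ℝ] ℂ :=
  ContinuousLinearMap.proj (R := ℝ) (φ := fun _ => ℂ) p.1 -
    ContinuousLinearMap.proj (R := ℝ) (φ := fun _ => ℂ) p.2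

@[simp] lemma pairDiff_apply (p : Fin n × Fin n) (w : Fin n → ℂ) :
    pairDiff p w = w p.1 - w p.2 := rfl

/-- The derivatives at `z` of `Δ²` and of the constraints are all of this form. -/
noncomputable def pairForm (z : Fin n → ℂ) (c : Fin n × Fin n → ℝ) : StrongDual ℝ (Fin n → ℂ) :=
  ∑ p, c p • (innerSL ℝ (pairDiff p z)).comp (pairDiff p)

lemma pairForm_apply_single (z : Fin n → ℂ) (c : Fin n × Fin n → ℝ) (k : Fin n) (w : ℂ) :
    pairForm z c (Pi.single k w) = inner ℝ (∑ j, (c (k, j) + c (j, k)) • (z k - z j)) w := by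
  simp only [pairForm, FunLike.coe_sum, Finset.sum_apply,
    FunLike.coe_smul, Pi.smul_apply, ContinuousLinearMap.coe_comp,
    Function.comp_apply, innerSL_apply_apply, pairDiff_apply, Pi.single_apply, inner_sub_right,
    apply_ite (inner ℝ _), inner_zero_right, smul_eq_mul, mul_sub, Finset.sum_sub_distrib,
    Fintype.sum_prod_type, mul_ite, mul_zero, Finset.sum_ite_eq', Finset.mem_univ, if_true,
    sum_inner, inner_smul_left]
  rw [Finset.sum_comm]
  simp only [Finset.sum_ite_eq', Finset.mem_univ, if_true, conj_trivial, add_mul,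
    Finset.sum_add_distrib, ← neg_sub (z k), inner_neg_left, mul_neg, Finset.sum_neg_distrib,
    sub_neg_eq_add]

lemma delta_sq_eq_prod (w : Fin n → ℂ) :
    Delta n w ^ 2 = ∏ p ∈ Finset.univ.filter (fun p : Fin n × Fin n => p.1 ≠ p.2),
      ‖pairDiff p w‖ ^ 2 := by
  simp only [Delta, ← Finset.prod_pow, pairDiff_apply, dist_eq_norm]

lemma hasFDerivAt_delta_sq {z : Fin n → ℂ} (hz : Function.Injective z) :
    HasFDerivAt (fun w => Delta n w ^ 2)
      (pairForm z fun p => 2 * Delta n z ^ 2 / ‖z p.1 - z p.2‖ ^ 2) z := by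
  set P := Finset.univ.filter (fun p : Fin n × Fin n => p.1 ≠ p.2)
  have hd := HasFDerivAt.finsetProd (u := P) fun p _ => (pairDiff p).hasFDerivAt.norm_sq (x := z)
  rw [show (fun w => Delta n w ^ 2) = fun w => ∏ p ∈ P, ‖pairDiff p w‖ ^ 2 from
    funext delta_sq_eq_prod]
  refine hd.congr_fderiv ?_
  rw [pairForm, ← Finset.sum_filter_of_ne (s := Finset.univ)
    (p := fun p : Fin n × Fin n => p.1 ≠ p.2) fun p _ h => ?diag]
  · refine Finset.sum_congr rfl fun p hp => ?_
    have hne : ‖pairDiff p z‖ ^ 2 ≠ 0 := by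
      simpa [sub_eq_zero] using hz.ne (Finset.mem_filter.mp hp).2
    rw [delta_sq_eq_prod, ← Finset.prod_erase_mul _ _ hp, ← pairDiff_apply, mul_div_assoc,
      mul_div_cancel_right₀ _ hne]
    module
  · contrapose! h
    simp [h]

lemma setOf_dist_le_two_eq :
    {w : Fin n → ℂ | ∀ i j, dist (w i) (w j) ≤ 2} =
      {w | ∀ p : Fin n × Fin n, ‖pairDiff p w‖ ^ 2 - 4 ≤ 0} := by
  ext w
  simp only [Set.mem_ofPred_eq, Prod.forall, pairDiff_apply, dist_eq_norm, sub_nonpos]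
  refine forall₂_congr fun i j => ?_
  rw [show (4 : ℝ) = 2 ^ 2 by norm_num, sq_le_sq₀ (norm_nonneg _) zero_le_two]

lemma sum_smul_sub_eq_of_pairForm_eq {z : Fin n → ℂ} {c c' : Fin n × Fin n → ℝ}
    (h : pairForm z c = pairForm z c') (k : Fin n) :
    ∑ j, (c (k, j) + c (j, k)) • (z k - z j) = ∑ j, (c' (k, j) + c' (j, k)) • (z k - z j) :=
  ext_inner_right ℝ fun w => by rw [← pairForm_apply_single, ← pairForm_apply_single, h]

lemma Complex.inv_norm_sq_smul_eq_conj_inv (a : ℂ) : (‖a‖ ^ 2)⁻¹ • a = conj a⁻¹ := by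
  rw [Complex.inv_def, map_mul, Complex.conj_conj, Complex.conj_ofReal, Complex.real_smul,
    Complex.normSq_eq_norm_sq, mul_comm]

lemma sum_inv_sub_eq_of_sum_smul_sub_eq {z : Fin n → ℂ} {k : Fin n} {r : ℝ} (hr : r ≠ 0)
    {m : Fin n → ℝ}
    (h : ∑ j, (r / ‖z k - z j‖ ^ 2 + r / ‖z j - z k‖ ^ 2) • (z k - z j) =
      ∑ j, (2 * m j) • (z k - z j)) :
    ∑ j ∈ Finset.univ.filter (· ≠ k), (z j - z k)⁻¹ =
      ∑ j ∈ Finset.univ.filter (· ≠ k), ((m j / r : ℝ) : ℂ) * (conj (z j) - conj (z k)) := by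
  have hterm : ∀ j, (r / ‖z k - z j‖ ^ 2 + r / ‖z j - z k‖ ^ 2) • (z k - z j) =
      (2 * r) • conj (z k - z j)⁻¹ := fun j => by
    rw [norm_sub_rev (z j), ← Complex.inv_norm_sq_smul_eq_conj_inv, smul_smul]
    ring_nf
  simp only [hterm, ← Finset.smul_sum, ← map_sum] at h
  have hconj : ((2 * r : ℝ) : ℂ) * ∑ j, (z k - z j)⁻¹ =
      ∑ j, (2 * m j : ℂ) * (conj (z k) - conj (z j)) := by
    simpa [Complex.real_smul, map_sum, map_ofNat] using congrArg conj h
  rw [Finset.sum_filter_of_ne fun j _ hj => ?_, Finset.sum_filter_of_ne fun j _ hj => ?_]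
  · calc ∑ j, (z j - z k)⁻¹ = -∑ j, (z k - z j)⁻¹ := by
          simp only [← neg_sub (z k), inv_neg, Finset.sum_neg_distrib]
      _ = -(((2 * r : ℝ) : ℂ)⁻¹ * ∑ j, (2 * m j : ℂ) * (conj (z k) - conj (z j))) := by
          rw [← hconj, inv_mul_cancel_left₀ (by exact_mod_cast mul_ne_zero two_ne_zero hr)]
      _ = _ := by
          rw [Finset.mul_sum, ← Finset.sum_neg_distrib]
          refine Finset.sum_congr rfl fun j _ => ?_
          push_cast
          ring
  · rintro rfl
    simp at hj
  · rintro rfl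
    simp at hj

lemma delta_pos {z : Fin n → ℂ} (hz : Function.Injective z) : 0 < Delta n z :=
  Finset.prod_pos fun _ hp => dist_pos.2 (hz.ne (Finset.mem_filter.1 hp).2)

theorem exists_pairForm_eq_of_isLocalMaxOn_delta {z : Fin n → ℂ} (hz : Function.Injective z)
    (hadm : Admissible n z)
    (hloc : IsLocalMaxOn (Delta n) {w : Fin n → ℂ | ∀ i j, dist (w i) (w j) ≤ 2} z) :
    ∃ μ : Fin n × Fin n → ℝ, (∀ p, 0 ≤ μ p) ∧ (∀ i j, dist (z i) (z j) < 2 → μ (i, j) = 0) ∧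
      (pairForm z fun p => 2 * Delta n z ^ 2 / ‖z p.1 - z p.2‖ ^ 2) =
        pairForm z fun p => 2 * μ p := by
  rw [setOf_dist_le_two_eq] at hloc
  have hmax : IsLocalMaxOn (fun w => Delta n w ^ 2)
      {w | ∀ p : Fin n × Fin n, ‖pairDiff p w‖ ^ 2 - 4 ≤ 0} z :=
    Filter.Eventually.mono hloc fun w hw =>
      pow_le_pow_left₀ (Finset.prod_nonneg fun _ _ => dist_nonneg) hw 2
  have hfeas : ∀ p : Fin n × Fin n, ‖pairDiff p z‖ ^ 2 - 4 ≤ 0 :=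
    (Set.ext_iff.mp setOf_dist_le_two_eq z).mp hadm
  -- `-z` points strictly inside every active constraint.
  obtain ⟨μ, hμ0, hμ, hKKT⟩ := hmax.exists_kkt_multipliers (hasFDerivAt_delta_sq hz)
    (fun p => ((pairDiff p).hasFDerivAt.norm_sq).sub_const 4) hfeas (u := -z) fun p hp => by
      simp only [smul_apply, ContinuousLinearMap.comp_apply, map_neg, innerSL_apply_apply,
        real_inner_self_eq_norm_sq, nsmul_eq_mul, Nat.cast_ofNat]
      linarith
  refine ⟨μ, hμ0, fun i j hij => hμ (i, j) ?_, hKKT.trans (Finset.sum_congr rfl fun p _ => ?_)⟩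
  · rw [pairDiff_apply, ← dist_eq_norm]
    nlinarith [dist_nonneg (x := z i) (y := z j)]
  · module

end Pairs

/-- KKT necessary conditions for a local maximizer of `Δ` on the feasible set. -/
theorem stmt9 (n : ℕ) (z : Fin n → ℂ) (hinj : Function.Injective z)
    (hadm : Admissible n z)
    (hloc : IsLocalMaxOn (Delta n)
      {w : Fin n → ℂ | ∀ i j, dist (w i) (w j) ≤ 2} z) :
    ∃ lam : Fin n → Fin n → ℝ,
      (∀ i j, lam i j = lam j i) ∧
      (∀ i j, 0 ≤ lam i j) ∧
      (∀ i j, dist (z i) (z j) < 2 → lam i j = 0) ∧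
      ∀ k : Fin n,
        ∑ j ∈ Finset.univ.filter (fun j : Fin n => j ≠ k), (z j - z k)⁻¹ =
        ∑ j ∈ Finset.univ.filter (fun j : Fin n => j ≠ k),
          (lam k j : ℂ) * ((starRingEnd ℂ) (z j) - (starRingEnd ℂ) (z k)) := by
  obtain ⟨μ, hμ0, hμ, hform⟩ := exists_pairForm_eq_of_isLocalMaxOn_delta hinj hadm hloc
  have hcoef := sum_smul_sub_eq_of_pairForm_eq hform
  simp only [← mul_add] at hcoef
  have hΔ := delta_pos hinj
  refine ⟨fun i j => (μ (i, j) + μ (j, i)) / (2 * Delta n z ^ 2), fun i j => ?_, fun i j => ?_,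
    fun i j hij => ?_, fun k => sum_inv_sub_eq_of_sum_smul_sub_eq (by positivity) (hcoef k)⟩
  · dsimp only
    rw [add_comm]
  · exact div_nonneg (add_nonneg (hμ0 _) (hμ0 _)) (by positivity)
  · simp [hμ i j hij, hμ j i (dist_comm (z i) (z j) ▸ hij)]
end

section
/- For n = 4, the maximal discriminant equals Δmax(4) = 4096·(7 − 4·√3), i.e. sSup { Δ(z) : z : Fin 4 → ℂ admissible } = 4096·(7 − 4·√3); moreover this value is attained by the kite configuration z with values 0, 2, √3 + i, √3 − i (where i is the imaginary unit). -/
/-- The kite configuration with vertices `0, 2, √3 + i, √3 − i`. -/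
noncomputable def kite : Fin 4 → ℂ :=
  ![0, 2, (Real.sqrt 3 : ℂ) + Complex.I, (Real.sqrt 3 : ℂ) - Complex.I]

/-
Δ is invariant under permutations of the points and grows with the distances, so after a
similarity we may assume that the two farthest points are `-1` and `1`; the other two, `c` and `d`, then satisfy
`|c ± 1|, |d ± 1|, |c - d| ≤ 2`, and `Δ = (2 |V c d|)²` with `V c d = (c² - 1)(d² - 1)(c - d)`.
Moving `d` alone, or `c` and `d` by a common translation, the admissible positions form an
intersection of closed discs of radius 2 on which `V` is a polynomial, so by the maximum modulus
principle more distances may be taken equal to 2: first (translation) one of `|c ± 1|, |d ± 1|`,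
by symmetry `|c + 1|`; then (moving `d`) also `|d + 1|`, `|d - 1|` or `|c - d|`. The sides of
length 2 form a star or a path on the four points, and the homothety `z ↦ (z + 1) / 2` turns the
claim into an inequality on unit vectors: three chords of the unit circle of length at most 1,
arranged as a star or a path, have product at most `2 - √3`, with equality at angles
30°, 30°, 60° (the kite). That inequality is elementary algebra.
-/

open Real Metric

theorem Delta_comp_perm {n : ℕ} (z : Fin n → ℂ) (σ : Equiv.Perm (Fin n)) :
    Delta n (z ∘ σ) = Delta n z :=
  Finset.prod_equiv (σ.prodCongr σ) (by simp) (by simp)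

theorem Delta_mono {n : ℕ} {z w : Fin n → ℂ} (h : ∀ i j, dist (z i) (z j) ≤ dist (w i) (w j)) :
    Delta n z ≤ Delta n w :=
  Finset.prod_le_prod (fun _ _ => dist_nonneg) fun p _ => h p.1 p.2

theorem Delta_four (z : Fin 4 → ℂ) :
    Delta 4 z = (dist (z 0) (z 1) * dist (z 0) (z 2) * dist (z 0) (z 3) *
      dist (z 1) (z 2) * dist (z 1) (z 3) * dist (z 2) (z 3)) ^ 2 := by
  rw [Delta, Finset.prod_filter, ← Finset.univ_product_univ, Finset.prod_product]
  simp only [Fin.prod_univ_four, ne_eq, Fin.reduceEq, not_false_eq_true, if_true,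
    not_true_eq_false, if_false]
  simp only [dist_comm (z 1) (z 0), dist_comm (z 2) (z 0), dist_comm (z 2) (z 1),
    dist_comm (z 3) (z 0), dist_comm (z 3) (z 1), dist_comm (z 3) (z 2)]
  ring

theorem exists_perm_dist_le {α : Type*} [PseudoMetricSpace α] {n : ℕ} (z : Fin (n + 2) → α) :
    ∃ σ : Equiv.Perm (Fin (n + 2)), ∀ i j, dist (z i) (z j) ≤ dist (z (σ 0)) (z (σ 1)) := by
  obtain ⟨⟨i, j⟩, -, hij⟩ := Finset.exists_max_image Finset.univ
    (fun p : Fin (n + 2) × Fin (n + 2) => dist (z p.1) (z p.2)) Finset.univ_nonempty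
  rcases eq_or_ne i j with rfl | hne
  · refine ⟨1, fun k l => ?_⟩
    have := hij (k, l) (Finset.mem_univ _)
    simp only [dist_self] at this
    exact this.trans dist_nonneg
  · refine ⟨Equiv.swap 0 i * Equiv.swap 1 (Equiv.swap 0 i j), fun k l => ?_⟩
    have h0 : Equiv.swap 0 i j ≠ 0 := by
      rw [Ne, Equiv.swap_apply_eq_iff, Equiv.swap_apply_left]; exact hne.symm
    have h01 : (0 : Fin (n + 2)) ≠ 1 := by simp
    simpa [Equiv.swap_apply_of_ne_of_ne h01 h0.symm] using hij (k, l) (Finset.mem_univ _)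

theorem norm_le_of_forall_dist_eq {E F : Type*} [NormedAddCommGroup E] [NormedSpace ℂ E]
    [Nontrivial E] [NormedAddCommGroup F] [NormedSpace ℂ F] {f : E → F} (hf : Differentiable ℂ f)
    {s : Finset E} (hs : s.Nonempty) {r C : ℝ}
    (hC : ∀ z, (∀ p ∈ s, dist z p ≤ r) → (∃ p ∈ s, dist z p = r) → ‖f z‖ ≤ C)
    {z : E} (hz : ∀ p ∈ s, dist z p ≤ r) : ‖f z‖ ≤ C := by
  set K := ⋂ p ∈ s, closedBall p r
  have hK : IsClosed K := isClosed_biInter fun p _ => isClosed_closedBall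
  have mem_K : ∀ w, w ∈ K ↔ ∀ p ∈ s, dist w p ≤ r := by simp [K]
  obtain ⟨p₀, hp₀⟩ := hs
  have hKb : Bornology.IsBounded K := isBounded_closedBall.subset
    (Set.biInter_subset_of_mem (t := fun p => closedBall p r) hp₀)
  refine Complex.norm_le_of_forall_mem_frontier_norm_le hKb hf.diffContOnCl (fun w hw => ?_)
    (subset_closure ((mem_K z).2 hz))
  have hwK : ∀ p ∈ s, dist w p ≤ r := (mem_K w).1 (hK.frontier_subset hw)
  refine hC w hwK ?_
  by_contra! hlt
  have hball : (⋂ p ∈ s, ball p r) ⊆ interior K := interior_maximal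
    (Set.iInter₂_mono fun p _ => ball_subset_closedBall)
    (isOpen_biInter_finset fun p _ => isOpen_ball)
  exact hw.2 (hball (Set.mem_iInter₂.2 fun p hp => mem_ball.2 ((hwK p hp).lt_of_ne (hlt p hp))))

-- Up to sign, `2 * V c d` is the Vandermonde product of `-1, 1, c, d`.
def V (c d : ℂ) : ℂ := (c + 1) * (c - 1) * (d + 1) * (d - 1) * (c - d)

theorem norm_V (c d : ℂ) :
    ‖V c d‖ = dist c (-1) * dist c 1 * dist d (-1) * dist d 1 * dist c d := by
  simp only [V, norm_mul, dist_eq_norm, sub_neg_eq_add]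

theorem V_neg (c d : ℂ) : V (-c) (-d) = -V c d := by unfold V; ring

theorem V_swap (c d : ℂ) : V d c = -V c d := by unfold V; ring

structure LensPair (c d : ℂ) : Prop where
  c_neg_one : dist c (-1) ≤ 2
  c_one : dist c 1 ≤ 2
  d_neg_one : dist d (-1) ≤ 2
  d_one : dist d 1 ≤ 2
  cd : dist c d ≤ 2

theorem LensPair.neg {c d : ℂ} (h : LensPair c d) : LensPair (-c) (-d) := by
  have e : ∀ x : ℂ, dist (-x) (-1) = dist x 1 ∧ dist (-x) 1 = dist x (-1) := fun x =>
    ⟨by rw [dist_neg_neg], by rw [← dist_neg_neg, neg_neg]⟩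
  exact ⟨(e c).1 ▸ h.c_one, (e c).2 ▸ h.c_neg_one, (e d).1 ▸ h.d_one, (e d).2 ▸ h.d_neg_one,
    (dist_neg_neg c d).symm ▸ h.cd⟩

theorem LensPair.swap {c d : ℂ} (h : LensPair c d) : LensPair d c :=
  ⟨h.d_neg_one, h.d_one, h.c_neg_one, h.c_one, dist_comm c d ▸ h.cd⟩

theorem Delta_four_neg_one_one (c d : ℂ) : Delta 4 ![-1, 1, c, d] = (2 * ‖V c d‖) ^ 2 := by
  have h2 : dist (-1 : ℂ) 1 = 2 := by rw [dist_eq_norm]; norm_num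
  rw [Delta_four, norm_V]
  simp only [Fin.isValue, Matrix.cons_val_zero, Matrix.cons_val_one, Matrix.cons_val_two,
    Matrix.cons_val_three, Matrix.head_cons, Matrix.tail_cons]
  rw [h2, dist_comm (-1) c, dist_comm (-1) d, dist_comm 1 c, dist_comm 1 d]
  ring

theorem sqrt_three_mul_le_and_le {P t : ℝ} (hP0 : 0 ≤ P) (hP : P ≤ 1 / 4) (ht0 : 0 ≤ t)
    (ht : t ^ 2 = P * (1 - P)) : √3 * P ≤ t ∧ t ≤ √3 * P + (2 - √3) / 2 := by
  have h3 : √3 ^ 2 = 3 := by simp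
  constructor
  · refine (sq_le_sq₀ (by positivity) ht0).1 ?_
    nlinarith
  · refine (sq_le_sq₀ ht0 (by nlinarith)).1 ?_
    nlinarith [sq_nonneg (2 * P - (2 - √3) / 2)]

-- Below, `X = 1 - cos α` and `Y = 1 - cos β` for angles `|α|, |β| ≤ π / 3`, and
-- `s = ± sin α sin β`, so that `s ^ 2 = X (2 - X) Y (2 - Y)`.
theorem mul_one_add_two_mul_sub_two_mul_le {X Y R : ℝ} (hX : X ∈ Set.Icc (0 : ℝ) (1 / 2))
    (hY : Y ∈ Set.Icc (0 : ℝ) (1 / 2)) (hR0 : 0 ≤ R) (hR : R ^ 2 = X * (2 - X) * (Y * (2 - Y))) :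
    X * Y * (1 + 2 * (X * Y) - 2 * R) ≤ (7 - 4 * √3) / 4 := by
  obtain ⟨hX0, hX1⟩ := hX
  obtain ⟨hY0, hY1⟩ := hY
  have h3 : √3 ^ 2 = 3 := by simp
  have hP0 : 0 ≤ X * Y := mul_nonneg hX0 hY0
  have hP : X * Y ≤ 1 / 4 := by nlinarith
  set t := √(X * Y * (1 - X * Y))
  have ht : t ^ 2 = X * Y * (1 - X * Y) := sq_sqrt (mul_nonneg hP0 (by linarith))
  obtain ⟨hlo, hhi⟩ := sqrt_three_mul_le_and_le hP0 hP (sqrt_nonneg _) ht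
  -- `X(2-X)Y(2-Y) - 3XY(1-XY) = XY(1-2X)(1-2Y)`
  have hRt : √3 * t ≤ R := by
    refine (sq_le_sq₀ (by positivity) hR0).1 ?_
    rw [mul_pow, h3, ht, hR]
    nlinarith [mul_nonneg hP0 (mul_nonneg (by linarith : (0:ℝ) ≤ 1 - 2 * X)
      (by linarith : (0:ℝ) ≤ 1 - 2 * Y))]
  calc X * Y * (1 + 2 * (X * Y) - 2 * R) ≤ X * Y * (1 + 2 * (X * Y) - 2 * (√3 * t)) := by gcongr
    _ = (t - √3 * (X * Y)) ^ 2 := by linear_combination (-(X * Y) ^ 2) * h3 - ht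
    _ ≤ ((2 - √3) / 2) ^ 2 := by gcongr; linarith
    _ = (7 - 4 * √3) / 4 := by linear_combination h3 / 4

theorem path_ineq {X Y s : ℝ} (hX : X ∈ Set.Icc (0 : ℝ) (1 / 2))
    (hY : Y ∈ Set.Icc (0 : ℝ) (1 / 2)) (hs : s ^ 2 = X * (2 - X) * (Y * (2 - Y)))
    (hZ : 1 + 2 * (X * Y) + 2 * s ≤ 1) :
    X * Y * (1 + 2 * (X * Y) + 2 * s) ≤ (7 - 4 * √3) / 4 := by
  have hs0 : s ≤ 0 := by nlinarith [mul_nonneg hX.1 hY.1]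
  simpa [sub_eq_add_neg] using
    mul_one_add_two_mul_sub_two_mul_le hX hY (neg_nonneg.2 hs0) (by rw [neg_sq, hs])

theorem star_ineq_of_nonneg {X Y s : ℝ} (hX : X ∈ Set.Icc (0 : ℝ) (1 / 2))
    (hY : Y ∈ Set.Icc (0 : ℝ) (1 / 2)) (hs0 : 0 ≤ s) (hs : s ^ 2 = X * (2 - X) * (Y * (2 - Y))) :
    X * Y * (X + Y - X * Y - s) ≤ (7 - 4 * √3) / 8 := by
  have hXY : X + Y - X * Y ≤ 1 / 2 + X * Y := by nlinarith [hX.2, hY.2]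
  have := mul_one_add_two_mul_sub_two_mul_le hX hY hs0 hs
  nlinarith [mul_nonneg hX.1 hY.1]

theorem star_ineq_of_nonpos {X Y s : ℝ} (hX : X ∈ Set.Icc (0 : ℝ) (1 / 2))
    (hY : Y ∈ Set.Icc (0 : ℝ) (1 / 2)) (hs0 : s ≤ 0) (hs : s ^ 2 = X * (2 - X) * (Y * (2 - Y)))
    (hZ : X + Y - X * Y - s ≤ 1 / 2) :
    X * Y * (X + Y - X * Y - s) ≤ (7 - 4 * √3) / 8 := by
  obtain ⟨hX0, hX1⟩ := hX
  obtain ⟨hY0, hY1⟩ := hY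
  have h3 : √3 ^ 2 = 3 := by simp
  set a := √(X * Y)
  set b := √((2 - X) * (2 - Y))
  have ha : a ^ 2 = X * Y := sq_sqrt (by positivity)
  have hb : b ^ 2 = (2 - X) * (2 - Y) := sq_sqrt (by nlinarith)
  have ha0 : 0 ≤ a := sqrt_nonneg _
  have hb0 : 0 ≤ b := sqrt_nonneg _
  have hab : a * b = -s := by
    refine (sq_eq_sq₀ (by positivity) (by linarith)).1 ?_
    rw [mul_pow, ha, hb, neg_sq, hs]; ring
  -- Cauchy–Schwarz: `a + b ≤ 2`, since `(X + Y - XY)^2 - XY(2-X)(2-Y) = (X - Y)^2`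
  have hsum : a + b ≤ 2 := by
    have : a * b ≤ X + Y - X * Y := by
      refine (sq_le_sq₀ (by positivity) (by nlinarith)).1 ?_
      rw [mul_pow, ha, hb]; nlinarith [sq_nonneg (X - Y)]
    nlinarith
  -- `(b - a) ^ 2 = 4 - 2 (X + Y - X Y - s) ≥ 3`
  have hdiff : √3 ≤ b - a := by
    have hab' : a ≤ b := (sq_le_sq₀ ha0 hb0).1 (by nlinarith)
    refine (sq_le_sq₀ (sqrt_nonneg 3) (by linarith)).1 ?_
    nlinarith
  have hXY : X * Y ≤ (7 - 4 * √3) / 4 := by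
    rw [← ha]
    calc a ^ 2 ≤ ((2 - √3) / 2) ^ 2 := by gcongr; linarith
      _ = (7 - 4 * √3) / 4 := by linear_combination h3 / 4
  nlinarith [mul_nonneg hX0 hY0]

theorem sq_dist_eq_re_im (z w : ℂ) : dist z w ^ 2 = (z.re - w.re) ^ 2 + (z.im - w.im) ^ 2 := by
  rw [Complex.dist_eq_re_im, sq_sqrt (by positivity)]

theorem re_sq_add_im_sq_of_norm_eq_one {z : ℂ} (hz : ‖z‖ = 1) : z.re ^ 2 + z.im ^ 2 = 1 := by
  simpa [hz] using (sq_dist_eq_re_im z 0).symm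

theorem star_chord_prod_le {p q : ℂ} (hp : ‖p‖ = 1) (hq : ‖q‖ = 1) (hp1 : dist p 1 ≤ 1)
    (hq1 : dist q 1 ≤ 1) (hpq : dist p q ≤ 1) : dist p 1 * dist q 1 * dist p q ≤ 2 - √3 := by
  have h3 : (2 - √3) ^ 2 = 7 - 4 * √3 := by linear_combination (sq_sqrt (by norm_num) : √3 ^ 2 = 3)
  have ep := re_sq_add_im_sq_of_norm_eq_one hp
  have eq := re_sq_add_im_sq_of_norm_eq_one hq
  have e1 : dist p 1 ^ 2 = 2 * (1 - p.re) := by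
    rw [sq_dist_eq_re_im]; simp only [Complex.one_re, Complex.one_im]; linear_combination ep
  have e2 : dist q 1 ^ 2 = 2 * (1 - q.re) := by
    rw [sq_dist_eq_re_im]; simp only [Complex.one_re, Complex.one_im]; linear_combination eq
  have e3 : dist p q ^ 2 =
      2 * ((1 - p.re) + (1 - q.re) - (1 - p.re) * (1 - q.re) - p.im * q.im) := by
    rw [sq_dist_eq_re_im]; linear_combination ep + eq
  have d1 := pow_le_one₀ dist_nonneg hp1 (n := 2)
  have d2 := pow_le_one₀ dist_nonneg hq1 (n := 2)
  have d3 := pow_le_one₀ dist_nonneg hpq (n := 2)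
  rw [e1] at d1; rw [e2] at d2; rw [e3] at d3
  have key : (1 - p.re) * (1 - q.re) *
      ((1 - p.re) + (1 - q.re) - (1 - p.re) * (1 - q.re) - p.im * q.im) ≤ (7 - 4 * √3) / 8 := by
    have hs : (p.im * q.im) ^ 2 =
        (1 - p.re) * (2 - (1 - p.re)) * ((1 - q.re) * (2 - (1 - q.re))) := by
      linear_combination (1 - q.re ^ 2) * ep + p.im ^ 2 * eq
    have hX0 : 0 ≤ 1 - p.re := by nlinarith
    have hY0 : 0 ≤ 1 - q.re := by nlinarith
    rcases le_total 0 (p.im * q.im) with hs0 | hs0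
    · exact star_ineq_of_nonneg ⟨hX0, by linarith⟩ ⟨hY0, by linarith⟩ hs0 hs
    · exact star_ineq_of_nonpos ⟨hX0, by linarith⟩ ⟨hY0, by linarith⟩ hs0 hs (by linarith)
  refine (sq_le_sq₀ (by positivity) (by nlinarith [sqrt_le_sqrt (show (3:ℝ) ≤ 4 by norm_num)])).1 ?_
  rw [mul_pow, mul_pow, e1, e2, e3, h3]
  linarith

theorem path_chord_prod_le {p r : ℂ} (hp : ‖p‖ = 1) (hpr : dist p r = 1) (hp1 : dist p 1 ≤ 1)
    (hr : ‖r‖ ≤ 1) (hr1 : dist r 1 ≤ 1) : dist p 1 * ‖r‖ * dist r 1 ≤ 2 - √3 := by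
  have h3 : (2 - √3) ^ 2 = 7 - 4 * √3 := by linear_combination (sq_sqrt (by norm_num) : √3 ^ 2 = 3)
  have ep := re_sq_add_im_sq_of_norm_eq_one hp
  have epr := sq_dist_eq_re_im p r
  rw [hpr] at epr
  set Y := ‖r‖ ^ 2 / 2 with hY
  have eY2 : r.re ^ 2 + r.im ^ 2 = 2 * Y := by
    rw [hY, ← dist_zero_right, sq_dist_eq_re_im]; simp; ring
  have eY : Y = p.re * r.re + p.im * r.im := by
    linear_combination (-1/2 : ℝ) * epr - (1/2 : ℝ) * ep - (1/2 : ℝ) * eY2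
  have e1 : dist p 1 ^ 2 = 2 * (1 - p.re) := by
    rw [sq_dist_eq_re_im]; simp only [Complex.one_re, Complex.one_im]; linear_combination ep
  have e2 : ‖r‖ ^ 2 = 2 * Y := by rw [hY]; ring
  have e3 : dist r 1 ^ 2 = 1 + 2 * ((1 - p.re) * Y) + 2 * (Y * p.re - r.re) := by
    rw [sq_dist_eq_re_im]; simp only [Complex.one_re, Complex.one_im]
    linear_combination eY2
  have d1 := pow_le_one₀ dist_nonneg hp1 (n := 2)
  have d2 := pow_le_one₀ (norm_nonneg _) hr (n := 2)
  have d3 := pow_le_one₀ dist_nonneg hr1 (n := 2)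
  rw [e1] at d1; rw [e2] at d2; rw [e3] at d3
  have key : (1 - p.re) * Y * (1 + 2 * ((1 - p.re) * Y) + 2 * (Y * p.re - r.re))
      ≤ (7 - 4 * √3) / 4 := by
    -- for the unit vector `q = p - r`, `Y * p.re - r.re = Re q - Re p * Re (p * conj q)`:
    -- this is the Gram identity of `1, p, q`
    have hs : (Y * p.re - r.re) ^ 2 = (1 - p.re) * (2 - (1 - p.re)) * (Y * (2 - Y)) := by
      linear_combination
        p.im ^ 2 * eY2 + (2 * Y - r.re ^ 2) * ep + (Y + p.im * r.im - p.re * r.re) * eY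
    have hX0 : 0 ≤ 1 - p.re := by nlinarith
    exact path_ineq ⟨hX0, by linarith⟩ ⟨by positivity, by linarith⟩ hs (by linarith)
  refine (sq_le_sq₀ (by positivity) (by nlinarith [sqrt_le_sqrt (show (3:ℝ) ≤ 4 by norm_num)])).1 ?_
  rw [mul_pow, mul_pow, e1, e2, e3, h3]
  linarith

theorem dist_two_mul_sub_one (x y : ℂ) : dist (2 * x - 1) (2 * y - 1) = 2 * dist x y := by
  rw [dist_eq_norm, dist_eq_norm, show 2 * x - 1 - (2 * y - 1) = 2 * (x - y) by ring, norm_mul]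
  norm_num

theorem dist_two_mul_sub_one_neg_one (x : ℂ) : dist (2 * x - 1) (-1) = 2 * ‖x‖ := by
  rw [dist_eq_norm, show 2 * x - 1 - (-1) = 2 * x by ring, norm_mul]
  norm_num

theorem dist_two_mul_sub_one_one (x : ℂ) : dist (2 * x - 1) 1 = 2 * dist x 1 := by
  rw [dist_eq_norm, dist_eq_norm, show 2 * x - 1 - 1 = 2 * (x - 1) by ring, norm_mul]
  norm_num

theorem norm_V_two_mul_sub_one (p q : ℂ) :
    ‖V (2 * p - 1) (2 * q - 1)‖ = 32 * (‖p‖ * dist p 1 * ‖q‖ * dist q 1 * dist p q) := by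
  rw [norm_V, dist_two_mul_sub_one_neg_one, dist_two_mul_sub_one_neg_one, dist_two_mul_sub_one_one,
    dist_two_mul_sub_one_one, dist_two_mul_sub_one]
  ring

theorem norm_V_le_of_star {c d : ℂ} (h : LensPair c d) (hc : dist c (-1) = 2)
    (hd : dist d (-1) = 2) : ‖V c d‖ ≤ 32 * (2 - √3) := by
  obtain ⟨p, rfl⟩ : ∃ p, c = 2 * p - 1 := ⟨(c + 1) / 2, by ring⟩
  obtain ⟨q, rfl⟩ : ∃ q, d = 2 * q - 1 := ⟨(d + 1) / 2, by ring⟩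
  obtain ⟨-, hp1, -, hq1, hpq⟩ := h
  simp only [dist_two_mul_sub_one_neg_one, dist_two_mul_sub_one_one, dist_two_mul_sub_one] at *
  have hp : ‖p‖ = 1 := by linarith
  have hq : ‖q‖ = 1 := by linarith
  rw [norm_V_two_mul_sub_one, hp, hq]
  have := star_chord_prod_le hp hq (by linarith) (by linarith) (by linarith)
  linarith

theorem norm_V_le_of_path_end {c d : ℂ} (h : LensPair c d) (hc : dist c (-1) = 2)
    (hcd : dist c d = 2) : ‖V c d‖ ≤ 32 * (2 - √3) := by
  obtain ⟨p, rfl⟩ : ∃ p, c = 2 * p - 1 := ⟨(c + 1) / 2, by ring⟩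
  obtain ⟨r, rfl⟩ : ∃ r, d = 2 * r - 1 := ⟨(d + 1) / 2, by ring⟩
  obtain ⟨-, hp1, hr, hr1, -⟩ := h
  simp only [dist_two_mul_sub_one_neg_one, dist_two_mul_sub_one_one, dist_two_mul_sub_one] at *
  have hp : ‖p‖ = 1 := by linarith
  have hpr : dist p r = 1 := by linarith
  rw [norm_V_two_mul_sub_one, hp, hpr]
  have := path_chord_prod_le hp hpr (by linarith) (by linarith) (by linarith)
  linarith

-- The reflection `z ↦ p * conj z` maps the path `p, 0, 1, q` to the path `1, 0, p, p * conj q`.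
theorem norm_V_le_of_path_middle {c d : ℂ} (h : LensPair c d) (hc : dist c (-1) = 2)
    (hd : dist d 1 = 2) : ‖V c d‖ ≤ 32 * (2 - √3) := by
  obtain ⟨p, rfl⟩ : ∃ p, c = 2 * p - 1 := ⟨(c + 1) / 2, by ring⟩
  obtain ⟨q, rfl⟩ : ∃ q, d = 2 * q - 1 := ⟨(d + 1) / 2, by ring⟩
  obtain ⟨-, hp1, hq, -, hpq⟩ := h
  simp only [dist_two_mul_sub_one_neg_one, dist_two_mul_sub_one_one, dist_two_mul_sub_one] at *
  have hp : ‖p‖ = 1 := by linarith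
  have hpp : p * (starRingEnd ℂ) p = 1 := by
    rw [Complex.mul_conj, Complex.normSq_eq_norm_sq, hp]; norm_num
  have reflect : ∀ x y : ℂ, dist (p * (starRingEnd ℂ) x) (p * (starRingEnd ℂ) y) = dist x y := by
    intro x y
    rw [dist_eq_norm, dist_eq_norm, ← mul_sub, ← map_sub, norm_mul, Complex.norm_conj, hp, one_mul]
  have e1 : dist p (p * (starRingEnd ℂ) q) = dist q 1 := by
    simpa [dist_comm] using reflect 1 q
  have e2 : ‖p * (starRingEnd ℂ) q‖ = ‖q‖ := by simp [hp]
  have e3 : dist (p * (starRingEnd ℂ) q) 1 = dist p q := by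
    rw [← hpp, reflect, dist_comm]
  rw [norm_V_two_mul_sub_one, hp, show dist q 1 = 1 by linarith]
  have := path_chord_prod_le hp (by rw [e1]; linarith) (by linarith) (by rw [e2]; linarith)
    (by rw [e3]; linarith)
  rw [e2, e3] at this
  linarith

theorem norm_V_le_of_dist_neg_one_eq {c d : ℂ} (h : LensPair c d) (hc : dist c (-1) = 2) :
    ‖V c d‖ ≤ 32 * (2 - √3) := by
  refine norm_le_of_forall_dist_eq (f := fun x => V c x) (by simp only [V]; fun_prop)
    (s := {-1, 1, c}) (Finset.insert_nonempty _ _) (r := 2) ?_ (z := d) ?_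
  · intro x hx hx2
    simp only [Finset.mem_insert, Finset.mem_singleton, forall_eq_or_imp, forall_eq,
      exists_eq_or_imp, exists_eq_left] at hx hx2
    have hl : LensPair c x := ⟨h.c_neg_one, h.c_one, hx.1, hx.2.1, dist_comm x c ▸ hx.2.2⟩
    rcases hx2 with e | e | e
    · exact norm_V_le_of_star hl hc e
    · exact norm_V_le_of_path_middle hl hc e
    · exact norm_V_le_of_path_end hl hc (dist_comm x c ▸ e)
  · simp only [Finset.mem_insert, Finset.mem_singleton, forall_eq_or_imp, forall_eq]
    exact ⟨h.d_neg_one, h.d_one, dist_comm c d ▸ h.cd⟩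

theorem norm_V_le_of_dist_pm_one_eq {c d : ℂ} (h : LensPair c d)
    (ht : dist c (-1) = 2 ∨ dist c 1 = 2 ∨ dist d (-1) = 2 ∨ dist d 1 = 2) :
    ‖V c d‖ ≤ 32 * (2 - √3) := by
  rcases ht with e | e | e | e
  · exact norm_V_le_of_dist_neg_one_eq h e
  · have := norm_V_le_of_dist_neg_one_eq h.neg (by rwa [dist_neg_neg])
    rwa [V_neg, norm_neg] at this
  · have := norm_V_le_of_dist_neg_one_eq h.swap e
    rwa [V_swap, norm_neg] at this
  · have := norm_V_le_of_dist_neg_one_eq h.swap.neg (by rwa [dist_neg_neg])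
    rwa [V_neg, V_swap, neg_neg] at this

-- Maximum modulus in a common translation of `c` and `d`, which leaves `dist c d` unchanged.
theorem norm_V_le {c d : ℂ} (h : LensPair c d) : ‖V c d‖ ≤ 32 * (2 - √3) := by
  have shift : ∀ x t a : ℂ, dist (x + t) a = dist t (a - x) := fun x t a => by
    rw [dist_eq_norm, dist_eq_norm]; congr 1; ring
  have key := norm_le_of_forall_dist_eq (f := fun t => V (c + t) (d + t))
    (by simp only [V]; fun_prop) (s := {-1 - c, 1 - c, -1 - d, 1 - d})
    (Finset.insert_nonempty _ _) (r := 2) (C := 32 * (2 - √3)) ?_ (z := 0) ?_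
  · simpa using key
  · intro t ht ht2
    simp only [Finset.mem_insert, Finset.mem_singleton, forall_eq_or_imp, forall_eq,
      exists_eq_or_imp, exists_eq_left] at ht ht2
    rw [← shift c t, ← shift c t, ← shift d t, ← shift d t] at ht ht2
    exact norm_V_le_of_dist_pm_one_eq
      ⟨ht.1, ht.2.1, ht.2.2.1, ht.2.2.2, by rw [dist_add_right]; exact h.cd⟩ ht2
  · simp only [Finset.mem_insert, Finset.mem_singleton, forall_eq_or_imp, forall_eq]
    rw [← shift c 0, ← shift c 0, ← shift d 0, ← shift d 0, add_zero, add_zero]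
    exact ⟨h.c_neg_one, h.c_one, h.d_neg_one, h.d_one⟩

theorem exists_lensPair_Delta_le {w : Fin 4 → ℂ}
    (hmax : ∀ i j, dist (w i) (w j) ≤ dist (w 0) (w 1)) (hpos : 0 < dist (w 0) (w 1))
    (h2 : dist (w 0) (w 1) ≤ 2) : ∃ c d, LensPair c d ∧ Delta 4 w ≤ Delta 4 ![-1, 1, c, d] := by
  set u := (w 1 - w 0) / 2
  set v : Fin 4 → ℂ := fun i => (w i - (w 0 + w 1) / 2) / u
  have hu : ‖u‖ = dist (w 0) (w 1) / 2 := by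
    rw [norm_div, dist_comm, dist_eq_norm]; norm_num
  have hu0 : u ≠ 0 := norm_pos_iff.1 (by rw [hu]; positivity)
  have hv_def : ∀ i, u * v i = w i - (w 0 + w 1) / 2 := fun i => mul_div_cancel₀ _ hu0
  have hdist : ∀ i j, dist (w i) (w j) = ‖u‖ * dist (v i) (v j) := fun i j => by
    rw [dist_eq_norm, dist_eq_norm, ← norm_mul, mul_sub, hv_def, hv_def]; ring_nf
  have hv_le : ∀ i j, dist (v i) (v j) ≤ 2 := fun i j => by
    have := hmax i j
    rw [hdist, hu] at this
    nlinarith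
  have e0 : v 0 = -1 := mul_left_cancel₀ hu0 (by rw [hv_def]; simp only [u]; ring)
  have e1 : v 1 = 1 := mul_left_cancel₀ hu0 (by rw [hv_def]; simp only [u]; ring)
  have hv : v = ![-1, 1, v 2, v 3] := by
    funext i; fin_cases i <;> simp [e0, e1]
  refine ⟨v 2, v 3, ⟨e0 ▸ hv_le 2 0, e1 ▸ hv_le 2 1, e0 ▸ hv_le 3 0, e1 ▸ hv_le 3 1, hv_le 2 3⟩, ?_⟩
  rw [← hv]
  refine Delta_mono fun i j => ?_
  rw [hdist]
  exact mul_le_of_le_one_left dist_nonneg (by rw [hu]; linarith)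

theorem Delta_le_of_admissible (z : Fin 4 → ℂ) (hz : Admissible 4 z) :
    Delta 4 z ≤ 4096 * (7 - 4 * √3) := by
  have h3 : √3 ^ 2 = 3 := by simp
  obtain ⟨σ, hσ⟩ := exists_perm_dist_le z
  rw [← Delta_comp_perm z σ]
  rcases (dist_nonneg (x := z (σ 0)) (y := z (σ 1))).eq_or_lt with h0 | hpos
  · rw [Delta_four]
    simp only [Function.comp_apply, ← h0, zero_mul, ne_eq, OfNat.ofNat_ne_zero,
      not_false_eq_true, zero_pow]
    nlinarith [sqrt_nonneg 3]
  obtain ⟨c, d, hl, hle⟩ := exists_lensPair_Delta_le (w := z ∘ σ) (fun i j => hσ (σ i) (σ j)) hpos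
    (hz _ _)
  calc Delta 4 (z ∘ σ) ≤ Delta 4 ![-1, 1, c, d] := hle
    _ = (2 * ‖V c d‖) ^ 2 := Delta_four_neg_one_one c d
    _ ≤ (2 * (32 * (2 - √3))) ^ 2 := by gcongr; exact norm_V_le hl
    _ = 4096 * (7 - 4 * √3) := by linear_combination 4096 * h3

theorem kite_admissible : Admissible 4 kite := by
  intro i j
  refine (sq_le_sq₀ dist_nonneg zero_le_two).1 ?_
  rw [sq_dist_eq_re_im]
  fin_cases i <;> fin_cases j <;> simp [kite] <;>
    nlinarith [sq_sqrt (show (0:ℝ) ≤ 3 by norm_num), sqrt_nonneg 3]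

theorem Delta_kite : Delta 4 kite = 4096 * (7 - 4 * √3) := by
  have h3 : √3 ^ 2 = 3 := by simp
  rw [Delta_four]
  simp only [mul_pow, sq_dist_eq_re_im]
  simp [kite]
  linear_combination (6656 - 2048 * √3 + 256 * (√3 ^ 2 + 3)) * h3

theorem stmt11 :
    Dmax 4 = 4096 * (7 - 4 * Real.sqrt 3) ∧
    Admissible 4 kite ∧
    Delta 4 kite = 4096 * (7 - 4 * Real.sqrt 3) := by
  refine ⟨?_, kite_admissible, Delta_kite⟩
  refine IsGreatest.csSup_eq ⟨⟨kite, kite_admissible, Delta_kite⟩, ?_⟩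
  rintro _ ⟨z, hz, rfl⟩
  exact Delta_le_of_admissible z hz
end

section
/- For k ≥ 1 set n = 6k and δ = π/n. Then the double product over 1 ≤ i ≤ k and 1 ≤ j ≤ k of cos⁴((i−j)δ − δ/2) / cos⁴((i−j)δ) converges, as k → ∞, to √3/2. -/
/-- The angle increment `δ = π / (6k)`. -/
noncomputable def dlt (k : ℕ) : ℝ := Real.pi / (6 * k)

open Real Filter Finset Topology

/-!
Pairing the factor indexed by `(i, j)` with the one indexed by `(j, i)` and using
`cos (x - δ/2) cos (x + δ/2) = cos² x - (1 - cos δ)/2` turns the product into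
`∏ (1 - u_{ij})²` with `u_{ij} = (1 - cos δ) / (2 cos² ((i - j) δ)) = O(δ²)`. Hence its
logarithm is `-(δ²/2) ∑ sec² ((i - j) δ) + O(k² δ⁴)`. Grouping the pairs by `d = i - j`, the sum
`δ² ∑ sec² ((i - j) δ)` is, up to `O(δ)`, twice a Riemann sum of the decreasing function
`(a - x) sec² x` on `[0, a]`, `a = k δ`, whose integral is `-log (cos a)`. So the product tends to
`cos a`, which is `√3/2` for `a = π/6`.
-/

theorem sum_Icc_sum_Icc_sub_of_even (F : ℝ → ℝ) (hF : ∀ x, F (-x) = F x) (k : ℕ) :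
    ∑ i ∈ Icc 1 k, ∑ j ∈ Icc 1 k, F (i - j) =
      k * F 0 + 2 * ∑ d ∈ Icc 1 k, (k - d : ℝ) * F d := by
  induction k with
  | zero => simp
  | succ k ih =>
    have reflect : ∑ j ∈ Icc 1 k, F ((k + 1 : ℕ) - j) = ∑ d ∈ Icc 1 k, F d := by
      refine sum_nbij' (fun j ↦ k + 1 - j) (fun d ↦ k + 1 - d) ?_ ?_ ?_ ?_ ?_ <;>
        intro j hj <;> simp only [mem_Icc] at hj ⊢
      · omega
      · omega
      · omega
      · omega
      · rw [Nat.cast_sub (by omega)]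
    simp only [sum_Icc_succ_top (Nat.le_add_left 1 k), sum_add_distrib, ih]
    have hneg : ∀ j : ℕ, F (j - (k + 1 : ℕ)) = F ((k + 1 : ℕ) - j) := fun j ↦ by
      rw [← hF]; ring_nf
    simp only [hneg, reflect, sub_self]
    push_cast
    simp only [add_sub_right_comm _ (1 : ℝ), add_mul, one_mul, sum_add_distrib, zero_mul,
      add_zero]
    ring

theorem AntitoneOn.riemann_sum_le_integral_le {g : ℝ → ℝ} {a : ℝ} (ha : 0 < a)
    (hg : AntitoneOn g (Set.Icc 0 a)) {k : ℕ} (hk : k ≠ 0) :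
    a / k * ∑ d ∈ Icc 1 k, g (d * (a / k)) ≤ ∫ x in 0..a, g x ∧
      ∫ x in 0..a, g x ≤ a / k * ∑ d ∈ Icc 1 k, g (d * (a / k)) + a / k * (g 0 - g a) := by
  set h := a / k with h_def
  have hh : 0 < h := by positivity
  have hkh : (k : ℝ) * h = a := by rw [h_def]; field_simp
  have hφ : AntitoneOn (fun t ↦ g (t * h)) (Set.Icc ((0 : ℕ) : ℝ) (k : ℕ)) := by
    intro s hs t ht hst
    have mem : ∀ u ∈ Set.Icc ((0 : ℕ) : ℝ) (k : ℕ), u * h ∈ Set.Icc 0 a := fun u hu ↦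
      ⟨mul_nonneg (by simpa using hu.1) hh.le, hkh ▸ mul_le_mul_of_nonneg_right hu.2 hh.le⟩
    exact hg (mem s hs) (mem t ht) (mul_le_mul_of_nonneg_right hst hh.le)
  have hint : ∫ t in ((0 : ℕ) : ℝ)..(k : ℕ), g (t * h) = h⁻¹ * ∫ x in 0..a, g x := by
    rw [intervalIntegral.integral_comp_mul_right _ hh.ne', Nat.cast_zero, zero_mul, hkh,
      smul_eq_mul]
  have upper := hφ.sum_le_integral_Ico (Nat.zero_le k)
  have lower := hφ.integral_le_sum_Ico (Nat.zero_le k)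
  have right : ∑ i ∈ Ico 0 k, g ((i + 1 : ℕ) * h) = ∑ d ∈ Icc 1 k, g (d * h) := by
    rw [sum_Ico_add' (fun d : ℕ ↦ g (d * h)), Ico_add_one_right_eq_Icc]
  have left : ∑ i ∈ Ico 0 k, g (i * h) = ∑ d ∈ Icc 1 k, g (d * h) + (g 0 - g a) := by
    have hk1 : 1 ≤ k := Nat.one_le_iff_ne_zero.mpr hk
    rw [sum_eq_sum_Ico_succ_bot (Nat.pos_of_ne_zero hk), ← Ico_add_one_right_eq_Icc,
      sum_Ico_succ_top hk1, hkh]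
    simp only [Nat.cast_zero, zero_mul]
    ring
  rw [hint, right] at upper
  rw [hint, left] at lower
  constructor
  · have := mul_le_mul_of_nonneg_left upper hh.le
    rwa [mul_inv_cancel_left₀ hh.ne'] at this
  · have := mul_le_mul_of_nonneg_left lower hh.le
    rwa [mul_inv_cancel_left₀ hh.ne', mul_add] at this

theorem AntitoneOn.tendsto_riemann_sum {g : ℝ → ℝ} {a : ℝ} (ha : 0 < a)
    (hg : AntitoneOn g (Set.Icc 0 a)) :
    Tendsto (fun k : ℕ ↦ a / k * ∑ d ∈ Icc 1 k, g (d * (a / k))) atTop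
      (𝓝 (∫ x in 0..a, g x)) := by
  have hlower : Tendsto (fun k : ℕ ↦ (∫ x in 0..a, g x) - a / k * (g 0 - g a)) atTop
      (𝓝 (∫ x in 0..a, g x)) := by
    simpa using tendsto_const_nhds.sub ((tendsto_const_div_atTop_nhds_zero_nat a).mul_const _)
  refine tendsto_of_tendsto_of_tendsto_of_le_of_le' hlower tendsto_const_nhds ?_ ?_ <;>
    filter_upwards [eventually_ne_atTop 0] with k hk
  · linarith [(hg.riemann_sum_le_integral_le ha hk).2]
  · exact (hg.riemann_sum_le_integral_le ha hk).1

theorem cos_le_cos_of_abs_le {x a : ℝ} (ha : a ≤ π) (hx : |x| ≤ a) : cos a ≤ cos x := by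
  rw [← cos_abs x]
  exact cos_le_cos_of_nonneg_of_le_pi (abs_nonneg x) ha hx

theorem three_quarters_le_cos_sq {x : ℝ} (hx : |x| ≤ π / 6) : 3 / 4 ≤ cos x ^ 2 := by
  have h := cos_le_cos_of_abs_le (by linarith [pi_pos]) hx
  rw [cos_pi_div_six] at h
  have h3 : √3 ^ 2 = 3 := sq_sqrt (by norm_num)
  nlinarith [sqrt_nonneg 3]

theorem integral_sub_div_cos_sq {a : ℝ} (ha0 : 0 ≤ a) (ha : a < π / 2) :
    ∫ x in 0..a, (a - x) / cos x ^ 2 = -log (cos a) := by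
  have hcos : ∀ x ∈ Set.uIcc 0 a, cos x ≠ 0 := fun x hx ↦ by
    rw [Set.uIcc_of_le ha0] at hx
    exact (cos_pos_of_mem_Ioo ⟨by linarith [pi_pos, hx.1], by linarith [hx.2]⟩).ne'
  have hderiv : ∀ x ∈ Set.uIcc 0 a,
      HasDerivAt (fun y ↦ (a - y) * tan y - log (cos y)) ((a - x) / cos x ^ 2) x := by
    intro x hx
    have := (((hasDerivAt_id x).const_sub a).mul (hasDerivAt_tan (hcos x hx))).sub
      ((hasDerivAt_cos x).log (hcos x hx))
    refine this.congr_deriv ?_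
    rw [tan_eq_sin_div_cos, id]
    field_simp [hcos x hx]
    ring
  have hcont : ContinuousOn (fun x ↦ (a - x) / cos x ^ 2) (Set.uIcc 0 a) :=
    (continuousOn_const.sub continuousOn_id).div (continuous_cos.pow 2).continuousOn
      fun x hx ↦ pow_ne_zero 2 (hcos x hx)
  rw [intervalIntegral.integral_eq_sub_of_hasDerivAt hderiv (hcont.intervalIntegrable)]
  simp

theorem antitoneOn_sub_div_cos_sq {a : ℝ} (ha : a ≤ π / 6) :
    AntitoneOn (fun x ↦ (a - x) / cos x ^ 2) (Set.Icc 0 a) := by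
  have hpi : π < 3.15 := pi_lt_d2
  have hcos : ∀ x ∈ Set.Icc 0 a, 3 / 4 ≤ cos x ^ 2 := fun x hx ↦
    three_quarters_le_cos_sq (abs_le.mpr ⟨by linarith [pi_pos, hx.1], by linarith [hx.2]⟩)
  have hcos0 : ∀ x ∈ Set.Icc 0 a, cos x ≠ 0 := fun x hx h ↦ by
    linarith [hcos x hx, h ▸ zero_pow two_ne_zero]
  refine antitoneOn_of_hasDerivWithinAt_nonpos (convex_Icc 0 a)
    (f' := fun x ↦ (2 * (a - x) * sin x * cos x - cos x ^ 2) / cos x ^ 4)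
    ((continuousOn_const.sub continuousOn_id).div (continuous_cos.pow 2).continuousOn
      fun x hx ↦ pow_ne_zero 2 (hcos0 x hx))
    (fun x hx ↦ ?_) (fun x hx ↦ ?_)
  all_goals rw [interior_Icc] at hx
  · have hx' := Set.Ioo_subset_Icc_self hx
    refine HasDerivAt.hasDerivWithinAt ?_
    refine (((hasDerivAt_id x).const_sub a).div ((hasDerivAt_cos x).fun_pow 2)
      (pow_ne_zero 2 (hcos0 x hx'))).congr_deriv ?_
    simp only [id]
    field_simp [hcos0 x hx']
    ring
  · have hx' := Set.Ioo_subset_Icc_self hx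
    have hsin : sin x ≤ x := sin_le hx.1.le
    have hc0 : 0 ≤ cos x :=
      cos_nonneg_of_neg_pi_div_two_le_of_le (by linarith [hx.1, pi_pos]) (by linarith [hx.2, pi_pos])
    have hc1 : cos x ≤ 1 := cos_le_one x
    refine div_nonpos_of_nonpos_of_nonneg ?_ (by positivity)
    nlinarith [hcos x hx', mul_le_mul hsin hc1 hc0 hx.1.le, hx.1, hx.2]

theorem abs_log_one_sub_add_le {u : ℝ} (hu : u ≤ 1 / 2) :
    |log (1 - u) + u| ≤ 2 * u ^ 2 := by
  have hpos : 0 < 1 - u := by linarith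
  have upper := log_le_sub_one_of_pos hpos
  have lower := one_sub_inv_le_log_of_pos hpos
  have hinv : 1 - (1 - u)⁻¹ = -u - u ^ 2 / (1 - u) := by field_simp; ring
  have hsq : u ^ 2 / (1 - u) ≤ 2 * u ^ 2 := by
    rw [div_le_iff₀ hpos]; nlinarith [sq_nonneg u]
  rw [abs_le]
  constructor <;> linarith

theorem one_sub_cos_div_mem_Icc {c δ : ℝ} (hc : 3 / 4 ≤ c ^ 2) :
    (1 - cos δ) / (2 * c ^ 2) ∈ Set.Icc 0 (δ ^ 2 / 3) := by
  have hcos := one_sub_sq_div_two_le_cos (x := δ)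
  constructor
  · exact div_nonneg (by linarith [cos_le_one δ]) (by positivity)
  · rw [div_le_iff₀ (by positivity)]
    nlinarith [sq_nonneg δ]

theorem abs_two_mul_log_one_sub_add_le {c δ : ℝ} (hc : 3 / 4 ≤ c ^ 2) (hδ : |δ| ≤ 1) :
    |2 * log (1 - (1 - cos δ) / (2 * c ^ 2)) + δ ^ 2 / (2 * c ^ 2)| ≤ δ ^ 4 := by
  obtain ⟨hu0, hu⟩ := one_sub_cos_div_mem_Icc (δ := δ) hc
  set u := (1 - cos δ) / (2 * c ^ 2) with hu_def
  have hδ2 : δ ^ 2 ≤ 1 := by nlinarith [sq_abs δ, abs_nonneg δ]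
  have hlog := abs_log_one_sub_add_le (u := u) (by linarith)
  have hcos := cos_bound hδ
  rw [Even.pow_abs (by decide)] at hcos
  have hsplit : 2 * log (1 - u) + δ ^ 2 / (2 * c ^ 2)
      = 2 * (log (1 - u) + u) + (cos δ - (1 - δ ^ 2 / 2)) / c ^ 2 := by
    rw [hu_def]; field_simp; ring
  have hquad : |(cos δ - (1 - δ ^ 2 / 2)) / c ^ 2| ≤ δ ^ 4 * (5 / 96) * (4 / 3) := by
    rw [abs_div, abs_of_pos (by positivity : 0 < c ^ 2), div_le_iff₀ (by positivity)]
    nlinarith [mul_le_mul_of_nonneg_left hc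
      (by positivity : (0 : ℝ) ≤ δ ^ 4 * (5 / 96) * (4 / 3))]
  have hu2 : u ^ 2 ≤ (δ ^ 2 / 3) ^ 2 := pow_le_pow_left₀ hu0 hu 2
  rw [hsplit]
  calc _ ≤ 2 * |log (1 - u) + u| + |(cos δ - (1 - δ ^ 2 / 2)) / c ^ 2| := by
        simpa [abs_mul] using abs_add_le (2 * (log (1 - u) + u)) _
    _ ≤ δ ^ 4 := by nlinarith

theorem cos_sub_mul_cos_add_half (x δ : ℝ) :
    cos (x - δ / 2) * cos (x + δ / 2) = cos x ^ 2 - (1 - cos δ) / 2 := by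
  rw [cos_sub, cos_add]
  conv_rhs => rw [show δ = 2 * (δ / 2) by ring, cos_two_mul]
  linear_combination
    (-sin (δ / 2) ^ 2) * sin_sq_add_cos_sq x + (cos x ^ 2 - 1) * sin_sq_add_cos_sq (δ / 2)

theorem prod_cos_sub_half_pow_four_div (s : Finset ℕ) (δ : ℝ)
    (hs : ∀ i ∈ s, ∀ j ∈ s, cos ((i - j) * δ) ≠ 0) :
    ∏ i ∈ s, ∏ j ∈ s, cos (((i : ℝ) - j) * δ - δ / 2) ^ 4 / cos (((i : ℝ) - j) * δ) ^ 4 =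
      ∏ i ∈ s, ∏ j ∈ s, (1 - (1 - cos δ) / (2 * cos (((i : ℝ) - j) * δ) ^ 2)) ^ 2 := by
  set f : ℕ → ℕ → ℝ := fun i j ↦
    cos (((i : ℝ) - j) * δ - δ / 2) ^ 2 / cos (((i : ℝ) - j) * δ) ^ 2
  calc _ = ∏ i ∈ s, ∏ j ∈ s, f i j * f i j := by
        refine prod_congr rfl fun i _ ↦ prod_congr rfl fun j _ ↦ ?_
        ring
    _ = ∏ i ∈ s, ∏ j ∈ s, f i j * f j i := by
        simp only [prod_mul_distrib]
        rw [prod_comm (f := fun i j ↦ f j i)]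
    _ = _ := by
        refine prod_congr rfl fun i hi ↦ prod_congr rfl fun j hj ↦ ?_
        have hc := hs i hi j hj
        have hji : ((j : ℝ) - i) * δ - δ / 2 = -((((i : ℝ) - j) * δ) + δ / 2) := by ring
        have hji' : ((j : ℝ) - i) * δ = -(((i : ℝ) - j) * δ) := by ring
        simp only [f]
        rw [hji, hji', cos_neg, cos_neg, div_mul_div_comm, ← mul_pow, cos_sub_mul_cos_add_half]
        field_simp

section Limit

variable {a : ℝ}

theorem abs_div_natCast_le_one (ha0 : 0 ≤ a) (ha : a ≤ 1) (k : ℕ) : |a / k| ≤ 1 := by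
  rcases Nat.eq_zero_or_pos k with rfl | hk
  · simp
  · rw [abs_of_nonneg (by positivity)]
    exact (div_le_self ha0 (Nat.one_le_cast.mpr hk)).trans ha

theorem abs_sub_mul_div_le (ha : 0 ≤ a) {k i j : ℕ} (hi : i ∈ Icc 1 k) (hj : j ∈ Icc 1 k) :
    |((i : ℝ) - j) * (a / k)| ≤ a := by
  rw [mem_Icc] at hi hj
  have hk : (0 : ℝ) < k := by exact_mod_cast hi.1.trans hi.2
  have hi' : (i : ℝ) ≤ k := by exact_mod_cast hi.2
  have hj' : (j : ℝ) ≤ k := by exact_mod_cast hj.2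
  have hij : |(i : ℝ) - j| ≤ k := by
    rw [abs_le]
    constructor <;> linarith [(i.cast_nonneg : (0 : ℝ) ≤ i), (j.cast_nonneg : (0 : ℝ) ≤ j)]
  rw [abs_mul, abs_of_nonneg (by positivity : 0 ≤ a / k)]
  calc |(i : ℝ) - j| * (a / k) ≤ k * (a / k) := by gcongr
    _ = a := by field_simp

theorem three_quarters_le_cos_sub_mul_div_sq (ha0 : 0 ≤ a) (ha : a ≤ π / 6) {k i j : ℕ}
    (hi : i ∈ Icc 1 k) (hj : j ∈ Icc 1 k) : 3 / 4 ≤ cos (((i : ℝ) - j) * (a / k)) ^ 2 :=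
  three_quarters_le_cos_sq ((abs_sub_mul_div_le ha0 hi hj).trans ha)

theorem tendsto_sq_mul_sum_inv_cos_sq (ha0 : 0 < a) (ha : a ≤ π / 6) :
    Tendsto (fun k : ℕ ↦ (a / k) ^ 2 * ∑ i ∈ Icc 1 k, ∑ j ∈ Icc 1 k,
      1 / cos (((i : ℝ) - j) * (a / k)) ^ 2) atTop (𝓝 (-2 * log (cos a))) := by
  have hriemann := (antitoneOn_sub_div_cos_sq ha).tendsto_riemann_sum ha0
  rw [integral_sub_div_cos_sq ha0.le (by linarith [pi_pos])] at hriemann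
  have hlim := ((tendsto_const_div_atTop_nhds_zero_nat a).const_mul a).add
    (hriemann.const_mul 2)
  rw [mul_zero, zero_add, mul_neg, ← neg_mul] at hlim
  refine hlim.congr' ?_
  filter_upwards [eventually_ne_atTop 0] with k hk
  have hk' : (k : ℝ) ≠ 0 := Nat.cast_ne_zero.mpr hk
  have hterm : ∀ d ∈ Icc 1 k, (k - d : ℝ) * (1 / cos (d * (a / k)) ^ 2) =
      (a / k)⁻¹ * ((a - d * (a / k)) / cos (d * (a / k)) ^ 2) := fun d _ ↦ by
    field_simp
  rw [sum_Icc_sum_Icc_sub_of_even (fun x ↦ 1 / cos (x * (a / k)) ^ 2)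
    (fun x ↦ by rw [neg_mul, cos_neg]), sum_congr rfl hterm, ← mul_sum, zero_mul, cos_zero]
  field_simp

theorem abs_sum_log_add_le (ha0 : 0 ≤ a) (ha : a ≤ π / 6) {k : ℕ} (hk : k ≠ 0) :
    |∑ i ∈ Icc 1 k, ∑ j ∈ Icc 1 k,
        (2 * log (1 - (1 - cos (a / k)) / (2 * cos (((i : ℝ) - j) * (a / k)) ^ 2))
          + (a / k) ^ 2 / (2 * cos (((i : ℝ) - j) * (a / k)) ^ 2))| ≤ (a ^ 2 / k) ^ 2 := by
  have hδ := abs_div_natCast_le_one ha0 (ha.trans (by linarith [pi_lt_four])) k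
  calc _ ≤ ∑ i ∈ Icc 1 k, ∑ j ∈ Icc 1 k, (a / k) ^ 4 :=
        (abs_sum_le_sum_abs _ _).trans <| sum_le_sum fun i hi ↦ (abs_sum_le_sum_abs _ _).trans <|
          sum_le_sum fun j hj ↦ abs_two_mul_log_one_sub_add_le
            (three_quarters_le_cos_sub_mul_div_sq ha0 ha hi hj) hδ
    _ = (a ^ 2 / k) ^ 2 := by
        have hk' : (k : ℝ) ≠ 0 := Nat.cast_ne_zero.mpr hk
        simp only [sum_const, Nat.card_Icc, add_tsub_cancel_right, nsmul_eq_mul]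
        field_simp

theorem tendsto_sum_two_mul_log (ha0 : 0 < a) (ha : a ≤ π / 6) :
    Tendsto (fun k : ℕ ↦ ∑ i ∈ Icc 1 k, ∑ j ∈ Icc 1 k,
      2 * log (1 - (1 - cos (a / k)) / (2 * cos (((i : ℝ) - j) * (a / k)) ^ 2)))
      atTop (𝓝 (log (cos a))) := by
  have herr : Tendsto (fun k : ℕ ↦ ∑ i ∈ Icc 1 k, ∑ j ∈ Icc 1 k,
      (2 * log (1 - (1 - cos (a / k)) / (2 * cos (((i : ℝ) - j) * (a / k)) ^ 2))
        + (a / k) ^ 2 / (2 * cos (((i : ℝ) - j) * (a / k)) ^ 2))) atTop (𝓝 0) := by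
    refine squeeze_zero_norm' ?_
      (by simpa using (tendsto_const_div_atTop_nhds_zero_nat (a ^ 2)).pow 2)
    filter_upwards [eventually_ne_atTop 0] with k hk
    exact abs_sum_log_add_le ha0.le ha hk
  have hlim := herr.sub ((tendsto_sq_mul_sum_inv_cos_sq ha0 ha).const_mul (1 / 2))
  rw [zero_sub, show -(1 / 2 * (-2 * log (cos a))) = log (cos a) by ring] at hlim
  refine hlim.congr fun k ↦ ?_
  simp only [mul_sum, ← sum_sub_distrib]
  exact sum_congr rfl fun i _ ↦ sum_congr rfl fun j _ ↦ by ring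

theorem prod_eq_exp_sum_two_mul_log (ha0 : 0 ≤ a) (ha : a ≤ π / 6) (k : ℕ) :
    ∏ i ∈ Icc 1 k, ∏ j ∈ Icc 1 k,
      cos (((i : ℝ) - j) * (a / k) - a / k / 2) ^ 4 / cos (((i : ℝ) - j) * (a / k)) ^ 4 =
      exp (∑ i ∈ Icc 1 k, ∑ j ∈ Icc 1 k,
        2 * log (1 - (1 - cos (a / k)) / (2 * cos (((i : ℝ) - j) * (a / k)) ^ 2))) := by
  have hcos := fun i (hi : i ∈ Icc 1 k) j (hj : j ∈ Icc 1 k) ↦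
    three_quarters_le_cos_sub_mul_div_sq ha0 ha hi hj
  rw [prod_cos_sub_half_pow_four_div _ _ fun i hi j hj h ↦ by
    linarith [hcos i hi j hj, h ▸ zero_pow two_ne_zero (M₀ := ℝ)], exp_sum]
  refine prod_congr rfl fun i hi ↦ ?_
  rw [exp_sum]
  refine prod_congr rfl fun j hj ↦ ?_
  have hδ := abs_div_natCast_le_one ha0 (ha.trans (by linarith [pi_lt_four])) k
  have hu := (one_sub_cos_div_mem_Icc (δ := a / k) (hcos i hi j hj)).2
  set y := 1 - (1 - cos (a / k)) / (2 * cos (((i : ℝ) - j) * (a / k)) ^ 2)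
  have hpos : 0 < y := by nlinarith [sq_abs (a / k), abs_nonneg (a / k)]
  rw [show 2 * log y = log (y ^ 2) by rw [log_pow, Nat.cast_ofNat], exp_log (pow_pos hpos 2)]

theorem tendsto_prod_cos_sub_half_pow_four_div (ha0 : 0 < a) (ha : a ≤ π / 6) :
    Tendsto (fun k : ℕ ↦ ∏ i ∈ Icc 1 k, ∏ j ∈ Icc 1 k,
      cos (((i : ℝ) - j) * (a / k) - a / k / 2) ^ 4 / cos (((i : ℝ) - j) * (a / k)) ^ 4)
      atTop (𝓝 (cos a)) := by
  have h := (continuous_exp.tendsto _).comp (tendsto_sum_two_mul_log ha0 ha)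
  rw [exp_log (cos_pos_of_mem_Ioo ⟨by linarith [pi_pos], by linarith [pi_pos]⟩)] at h
  exact h.congr fun k ↦ (prod_eq_exp_sum_two_mul_log ha0.le ha k).symm

end Limit

theorem stmt14 :
    Filter.Tendsto (fun k : ℕ =>
      ∏ i ∈ Finset.Icc 1 k, ∏ j ∈ Finset.Icc 1 k,
        Real.cos (((i : ℝ) - (j : ℝ)) * dlt k - dlt k / 2) ^ 4 /
          Real.cos (((i : ℝ) - (j : ℝ)) * dlt k) ^ 4)
      Filter.atTop (nhds (Real.sqrt 3 / 2)) := by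
  have h := tendsto_prod_cos_sub_half_pow_four_div (a := π / 6) (by positivity) le_rfl
  rw [cos_pi_div_six] at h
  simpa only [dlt, div_div] using h
end

section
/- For every natural number n ≥ 1 and every real t, the sum over m = 0, 1, …, n−1 of |cos(t − m·π/n)| is at most 1 / sin(π/(2n)). -/
/-!
The sum `f t = ∑ m < n, |cos (t - m π / n)|` is `π / n`-periodic: shifting `t` by `π / n` moves
each term to the next one, and the last term wraps around to the first because `|cos|` has
period `π`. So we may take `t ∈ [π/2 - π/n, π/2)`, where every argument `t - m π / n` lies in
`[-π/2, π/2]` and the absolute values can be dropped. The remaining sum of cosines in arithmetic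
progression telescopes after multiplication by `sin (π / (2n))`, to `sin (t + π / (2n)) ≤ 1`.
-/

open Real Finset Function

theorem Function.Periodic.sum_range_sub_mul_div {M : Type*} [AddCommMonoid M] {φ : ℝ → M}
    {p : ℝ} (hφ : Periodic φ p) (n : ℕ) :
    Periodic (fun t => ∑ m ∈ range n, φ (t - m * p / n)) (p / n) := by
  intro t
  cases n with
  | zero => simp
  | succ k =>
    dsimp only
    rw [sum_range_succ', sum_range_succ]
    congr 1
    · refine sum_congr rfl fun i _ => congr_arg φ ?_
      push_cast
      field_simp
      ring
    · rw [← hφ (t - k * p / (k + 1 : ℕ))]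
      congr 1
      push_cast
      field_simp
      ring

theorem two_mul_sin_mul_sum_range_cos_sub_mul (x h : ℝ) (n : ℕ) :
    2 * sin (h / 2) * ∑ m ∈ range n, cos (x - m * h) =
      sin (x + h / 2) - sin (x - n * h + h / 2) := by
  have step (m : ℕ) : 2 * sin (h / 2) * cos (x - m * h) =
      sin (x - m * h + h / 2) - sin (x - (m + 1 : ℕ) * h + h / 2) := by
    rw [sin_sub_sin]
    push_cast
    ring_nf
  simp_rw [mul_sum, step]
  rw [sum_range_sub']
  simp

theorem sum_range_cos_sub_mul_pi_div_mul_sin (y : ℝ) {n : ℕ} (hn : n ≠ 0) :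
    (∑ m ∈ range n, cos (y - m * π / n)) * sin (π / (2 * n)) = sin (y + π / (2 * n)) := by
  have h := two_mul_sin_mul_sum_range_cos_sub_mul y (π / n) n
  rw [mul_div_cancel₀ _ (Nat.cast_ne_zero.mpr hn), div_div, sub_add_eq_add_sub, sin_sub_pi,
    mul_comm (n : ℝ) 2] at h
  simp_rw [mul_div_assoc]
  linarith

theorem cos_sub_mul_pi_div_nonneg {n m : ℕ} (hm : m < n) {y : ℝ}
    (hy : y ∈ Set.Icc (π / 2 - π / n) (π / 2)) : 0 ≤ cos (y - m * π / n) := by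
  have hn : (0 : ℝ) < n := by exact_mod_cast (m.zero_le.trans_lt hm)
  have hm' : (m : ℝ) + 1 ≤ n := by exact_mod_cast hm
  have hlast : m * π / n + π / n ≤ π := by
    rw [← add_div, div_le_iff₀ hn]
    nlinarith [pi_pos]
  have : 0 ≤ m * π / n := by positivity
  exact cos_nonneg_of_mem_Icc ⟨by linarith [hy.1], by linarith [hy.2]⟩

theorem stmt15 (n : ℕ) (hn : 1 ≤ n) (t : ℝ) :
    ∑ m ∈ Finset.range n, |Real.cos (t - (m : ℝ) * Real.pi / n)| ≤
      1 / Real.sin (Real.pi / (2 * n)) := by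
  have hn₀ : (0 : ℝ) < n := by exact_mod_cast hn
  have hsin : 0 < sin (π / (2 * n)) := by
    refine sin_pos_of_pos_of_lt_pi (by positivity) ?_
    rw [div_lt_iff₀ (by positivity)]
    nlinarith [pi_pos, (by exact_mod_cast hn : (1 : ℝ) ≤ n)]
  have habs : Periodic (fun x => |cos x|) π := fun x => by simp [cos_add_pi]
  obtain ⟨y, ⟨hy₁, hy₂⟩, hty⟩ :=
    (habs.sum_range_sub_mul_div n).exists_mem_Ico (by positivity) t (π / 2 - π / n)
  have hcos (m : ℕ) (hm : m ∈ range n) : |cos (y - m * π / n)| = cos (y - m * π / n) :=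
    abs_of_nonneg (cos_sub_mul_pi_div_nonneg (mem_range.mp hm) ⟨hy₁, by linarith⟩)
  rw [hty, sum_congr rfl hcos, le_div_iff₀ hsin,
    sum_range_cos_sub_mul_pi_div_mul_sin y (by omega)]
  exact sin_le_one _
end
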